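/- arXiv:2411.15575 — 4 statements merged into one kernel-verified Lean document; each statement's English description precedes it below -/
import Mathlib

section
/- Let E : [0,T) → [0,∞) be a C^1 function satisfying E' ≤ C(√(μ E) + E + μ^{-a/2} E²) with E(0) ≤ Cμ, for constants C > 0, a ∈ [1,2), μ ∈ (0,1). Then for each fixed t with C'(t+1) < (1 - a/2)·log(1/μ) (C' a suitable constant depending on C), one has E(t) ≤ C μ e^{C' t}. In particular E(t) ≤ C_t μ for μ sufficiently small. -/
set_option maxHeartbeats 1000000 in
/-- Nonlinear Gronwall lemma: if `E' ≤ C(√(μE) + E + μ^{-a/2} E²)` with `E(0) ≤ Cμ`,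
`a ∈ [1,2)`, `μ ∈ (0,1)`, then there is `C' = C'(C,a)` such that for each `t` with
`C'(t+1) < (1 - a/2) log(1/μ)` one has `E(t) ≤ Cμ e^{C't}`. -/
theorem gronwall_relaxation (C a : ℝ) (hC : 0 < C) (ha1 : 1 ≤ a) (ha2 : a < 2) :
    ∃ C' : ℝ, 0 < C' ∧
      ∀ (μ T : ℝ), 0 < μ → μ < 1 → 0 < T →
        ∀ (E E' : ℝ → ℝ),
          (∀ t ∈ Set.Ico (0:ℝ) T, 0 ≤ E t) →
          (∀ t ∈ Set.Ico (0:ℝ) T, HasDerivAt E (E' t) t) →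
          (∀ t ∈ Set.Ico (0:ℝ) T,
            E' t ≤ C * (Real.sqrt (μ * E t) + E t + μ ^ (-(a/2)) * (E t)^2)) →
          E 0 ≤ C * μ →
          ∀ t ∈ Set.Ico (0:ℝ) T,
            C' * (t + 1) < (1 - a/2) * Real.log (1/μ) →
              E t ≤ C * μ * Real.exp (C' * t) := by
  set C' : ℝ := 2 * C + Real.sqrt C + 1 with hC'def
  have hsC : 0 < Real.sqrt C := Real.sqrt_pos.mpr hC
  have hC'pos : 0 < C' := by positivity
  refine ⟨C', hC'pos, ?_⟩
  intro μ T hμ hμ1 hT E E' hEnn hEd hEineq hE0 t ht hcond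
  obtain ⟨ht0, htT⟩ := ht
  -- the barrier
  set B : ℝ → ℝ := fun s => C * μ * Real.exp (C' * s) with hBdef
  have hBd : ∀ x, HasDerivAt B (C' * B x) x := by
    intro x
    have h1 : HasDerivAt (fun s : ℝ => C' * s) C' x := by
      simpa using (hasDerivAt_id x).const_mul C'
    have h2 := (h1.exp).const_mul (C * μ)
    simpa [hBdef, mul_comm, mul_left_comm, mul_assoc] using h2
  have key : ∀ x ∈ Set.Icc (0:ℝ) t, E x ≤ B x := by
    apply image_le_of_deriv_right_lt_deriv_boundary
      (f' := E') (B := B) (B' := fun x => C' * B x)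
    · -- continuity of E on Icc 0 t
      intro x hx
      have hxT : x ∈ Set.Ico (0:ℝ) T := ⟨hx.1, lt_of_le_of_lt hx.2 htT⟩
      exact (hEd x hxT).continuousAt.continuousWithinAt
    · intro x hx
      have hxT : x ∈ Set.Ico (0:ℝ) T := ⟨hx.1, hx.2.trans htT⟩
      exact (hEd x hxT).hasDerivWithinAt
    · simpa [hBdef] using hE0
    · exact hBd
    · -- the key bound at touching points
      intro x hx hEB
      have hxT : x ∈ Set.Ico (0:ℝ) T := ⟨hx.1, hx.2.trans htT⟩
      have hx0 : 0 ≤ x := hx.1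
      have hb : 0 < B x := by
        have := Real.exp_pos (C' * x); positivity
      -- b ≤ μ^(a/2)
      have hlog : Real.log (1/μ) = - Real.log μ := by
        rw [one_div, Real.log_inv]
      have hexp : Real.exp (C' * x) * Real.exp C' < μ ^ (a/2 - 1) := by
        rw [← Real.exp_add, Real.rpow_def_of_pos hμ]
        apply Real.exp_lt_exp.mpr
        have hx' : C' * x + C' ≤ C' * (t + 1) := by nlinarith [hx.2.le]
        calc C' * x + C' ≤ C' * (t + 1) := hx'
          _ < (1 - a/2) * Real.log (1/μ) := hcond
          _ = Real.log μ * (a/2 - 1) := by rw [hlog]; ring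
      have hBle : B x < μ ^ (a/2) := by
        have h1 : C * μ * Real.exp (C' * x) * Real.exp C' < C * μ * μ ^ (a/2 - 1) := by
          have := mul_lt_mul_of_pos_left hexp (by positivity : (0:ℝ) < C * μ)
          linarith [this]
        have h2 : μ * μ ^ (a/2 - 1) = μ ^ (a/2) := by
          nth_rewrite 1 [← Real.rpow_one μ]
          rw [← Real.rpow_add hμ]
          norm_num
        have hC'exp : C < Real.exp C' := by
          have := Real.add_one_le_exp C'
          nlinarith [hsC]
        have h3 : B x * Real.exp C' < C * μ ^ (a/2) := by
          calc B x * Real.exp C' = C * μ * Real.exp (C' * x) * Real.exp C' := by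
                rw [hBdef]
            _ < C * μ * μ ^ (a/2 - 1) := h1
            _ = C * μ ^ (a/2) := by rw [mul_assoc, h2]
        have hμa : 0 < μ ^ (a/2) := Real.rpow_pos_of_pos hμ _
        nlinarith [Real.exp_pos C', hb]
      -- bound each term
      have hsqrt : Real.sqrt (μ * E x) ≤ B x / Real.sqrt C := by
        rw [hEB]
        have h1 : μ * B x ≤ (B x / Real.sqrt C)^2 := by
          have hsq : (B x / Real.sqrt C)^2 = (B x)^2 / C := by
            rw [div_pow, Real.sq_sqrt hC.le]
          rw [hsq, hBdef]
          have he1 : Real.exp (C' * x) ≤ Real.exp (C' * x) * Real.exp (C' * x) := by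
            nlinarith [Real.one_le_exp (by positivity : (0:ℝ) ≤ C' * x),
              Real.exp_pos (C' * x)]
          have : μ * (C * μ * Real.exp (C' * x)) ≤
              (C * μ * Real.exp (C' * x))^2 / C := by
            rw [le_div_iff₀ hC]
            nlinarith [Real.exp_pos (C' * x), sq_nonneg μ, hμ]
          simpa using this
        calc Real.sqrt (μ * B x) ≤ Real.sqrt ((B x / Real.sqrt C)^2) :=
              Real.sqrt_le_sqrt h1
          _ = B x / Real.sqrt C := Real.sqrt_sq (by positivity)
      have hquad : μ ^ (-(a/2)) * (E x)^2 ≤ E x := by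
        rw [hEB]
        have h1 : μ ^ (-(a/2)) * B x ≤ 1 := by
          have h2 : μ ^ (-(a/2)) * μ ^ (a/2) = 1 := by
            rw [← Real.rpow_add hμ]; norm_num
          calc μ ^ (-(a/2)) * B x ≤ μ ^ (-(a/2)) * μ ^ (a/2) := by
                apply mul_le_mul_of_nonneg_left hBle.le (Real.rpow_nonneg hμ.le _)
            _ = 1 := h2
        calc μ ^ (-(a/2)) * (B x)^2 = (μ ^ (-(a/2)) * B x) * B x := by ring
          _ ≤ 1 * B x := mul_le_mul_of_nonneg_right h1 hb.le
          _ = B x := one_mul _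
      -- conclude
      have hmain := hEineq x hxT
      have hfin : C * (Real.sqrt (μ * E x) + E x + μ ^ (-(a/2)) * (E x)^2) < C' * B x := by
        have h1 : C * (B x / Real.sqrt C) = Real.sqrt C * B x := by
          have hss : Real.sqrt C * Real.sqrt C = C := Real.mul_self_sqrt hC.le
          rw [mul_div_assoc', div_eq_iff hsC.ne']
          linear_combination (-(B x)) * hss
        have := hEineq x hxT
        have hE' : C * (Real.sqrt (μ * E x) + E x + μ ^ (-(a/2)) * (E x)^2)
            ≤ C * (B x / Real.sqrt C + B x + B x) := by
          apply mul_le_mul_of_nonneg_left _ hC.le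
          rw [hEB] at hsqrt hquad ⊢
          linarith
        calc C * (Real.sqrt (μ * E x) + E x + μ ^ (-(a/2)) * (E x)^2)
            ≤ C * (B x / Real.sqrt C + B x + B x) := hE'
          _ = Real.sqrt C * B x + 2 * C * B x := by rw [mul_add, mul_add, h1]; ring
          _ < C' * B x := by rw [hC'def]; nlinarith [hb]
      exact lt_of_le_of_lt hmain hfin
  have := key t ⟨ht0, le_refl t⟩
  simpa [hBdef] using this
end

section
/- Let E : [0,T) → [0,∞) be C^1 with E(0) = 0 and E' ≤ C(μ² + E + μ² E²) for constants C > 0 and 0 < μ < 1. Then min{E(t), μ^{-2}} ≤ C_t μ² where C_t = (e^{2Ct} − 1)/2; consequently, if in addition C_T μ^4 < 1, then E(t) ≤ C_t μ² for all t ∈ [0,T). -/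
/-- Gronwall-type lemma: if `E(0) = 0` and `E' ≤ C(μ² + E + μ²E²)` with `0 < μ < 1`, then
`min{E(t), μ⁻²} ≤ C_t μ²` where `C_t = (e^{2Ct} - 1)/2`; if moreover `C_T μ⁴ < 1`,
then `E(t) ≤ C_t μ²` for all `t ∈ [0,T)`. -/
theorem gronwall_intermediate (C μ T : ℝ) (hC : 0 < C) (hμ0 : 0 < μ) (hμ1 : μ < 1)
    (hT : 0 < T) (E E' : ℝ → ℝ)
    (hE0 : E 0 = 0)
    (hEnn : ∀ t ∈ Set.Ico (0:ℝ) T, 0 ≤ E t)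
    (hderiv : ∀ t ∈ Set.Ico (0:ℝ) T, HasDerivAt E (E' t) t)
    (hineq : ∀ t ∈ Set.Ico (0:ℝ) T, E' t ≤ C * (μ^2 + E t + μ^2 * (E t)^2)) :
    (∀ t ∈ Set.Ico (0:ℝ) T,
      min (E t) (1 / μ^2) ≤ ((Real.exp (2*C*t) - 1) / 2) * μ^2) ∧
    (((Real.exp (2*C*T) - 1) / 2) * μ^4 < 1 →
      ∀ t ∈ Set.Ico (0:ℝ) T, E t ≤ ((Real.exp (2*C*t) - 1) / 2) * μ^2) := by
  have hμ2 : (0:ℝ) < μ^2 := by positivity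
  -- Core Gronwall lemma
  have key : ∀ b ∈ Set.Ico (0:ℝ) T, (∀ s ∈ Set.Ico (0:ℝ) b, E s ≤ 1 / μ^2) →
      E b ≤ ((Real.exp (2*C*b) - 1) / 2) * μ^2 := by
    intro b hb hsmall
    have hsub : Set.Icc (0:ℝ) b ⊆ Set.Ico (0:ℝ) T := fun s hs =>
      ⟨hs.1, lt_of_le_of_lt hs.2 hb.2⟩
    have hsub' : Set.Ico (0:ℝ) b ⊆ Set.Ico (0:ℝ) T := fun s hs =>
      ⟨hs.1, lt_of_lt_of_le hs.2 hb.2.le⟩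
    have hcont : ContinuousOn E (Set.Icc 0 b) := fun s hs =>
      ((hderiv s (hsub hs)).continuousAt).continuousWithinAt
    have H := le_gronwallBound_of_liminf_deriv_right_le (f := E) (f' := E')
      (δ := 0) (K := 2*C) (ε := C*μ^2) (a := 0) (b := b) hcont
      (fun x hx r hr => ((hderiv x (hsub' hx)).hasDerivWithinAt).liminf_right_slope_le hr)
      (le_of_eq hE0)
      (fun x hx => by
        have h1 := hineq x (hsub' hx)
        have h2 := hEnn x (hsub' hx)
        have h3 := hsmall x hx
        have h4 : μ^2 * (E x)^2 ≤ E x := by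
          have := (le_div_iff₀ hμ2).mp h3
          have hm : μ^2 * E x ≤ 1 := by nlinarith
          nlinarith
        nlinarith)
    have := H b ⟨hb.1, le_refl b⟩
    rw [gronwallBound_of_K_ne_0 (by positivity : (2*C) ≠ 0)] at this
    calc E b ≤ 0 * Real.exp (2*C*(b-0)) + C*μ^2 / (2*C) * (Real.exp (2*C*(b-0)) - 1) := this
      _ = ((Real.exp (2*C*b) - 1) / 2) * μ^2 := by
          rw [sub_zero]; field_simp; ring
  have part1 : ∀ t ∈ Set.Ico (0:ℝ) T,
      min (E t) (1 / μ^2) ≤ ((Real.exp (2*C*t) - 1) / 2) * μ^2 := by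
    intro t ht
    by_cases hcase : ∀ s ∈ Set.Ico (0:ℝ) t, E s ≤ 1 / μ^2
    · exact le_trans (min_le_left _ _) (key t ht hcase)
    · push_neg at hcase
      obtain ⟨s₁, hs₁, hs₁'⟩ := hcase
      set S : Set ℝ := Set.Icc 0 t ∩ E ⁻¹' (Set.Ici (1/μ^2)) with hS
      have hsub : Set.Icc (0:ℝ) t ⊆ Set.Ico 0 T := fun s hs =>
        ⟨hs.1, lt_of_le_of_lt hs.2 ht.2⟩
      have hcont : ContinuousOn E (Set.Icc 0 t) := fun s hs =>
        ((hderiv s (hsub hs)).continuousAt).continuousWithinAt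
      have hSclosed : IsClosed S :=
        hcont.preimage_isClosed_of_isClosed isClosed_Icc isClosed_Ici
      have hSne : S.Nonempty := ⟨s₁, ⟨hs₁.1, hs₁.2.le⟩, hs₁'.le⟩
      have hSbdd : BddBelow S := ⟨0, fun x hx => hx.1.1⟩
      set s₀ := sInf S with hs₀def
      have hs₀S : s₀ ∈ S := hSclosed.csInf_mem hSne hSbdd
      have hs₀Icc : s₀ ∈ Set.Icc (0:ℝ) t := hs₀S.1
      have hs₀T : s₀ ∈ Set.Ico (0:ℝ) T := hsub hs₀Icc
      have hbelow : ∀ s ∈ Set.Ico (0:ℝ) s₀, E s ≤ 1 / μ^2 := by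
        intro s hs
        by_contra hcon
        push_neg at hcon
        have : s ∈ S := ⟨⟨hs.1, hs.2.le.trans hs₀Icc.2⟩, hcon.le⟩
        exact absurd (csInf_le hSbdd this) (not_le.mpr hs.2)
      have hEs₀ : E s₀ ≤ ((Real.exp (2*C*s₀) - 1) / 2) * μ^2 := key s₀ hs₀T hbelow
      have hge : 1/μ^2 ≤ E s₀ := hs₀S.2
      have hmono : ((Real.exp (2*C*s₀) - 1) / 2) * μ^2 ≤ ((Real.exp (2*C*t) - 1) / 2) * μ^2 := by
        have : Real.exp (2*C*s₀) ≤ Real.exp (2*C*t) :=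
          Real.exp_le_exp.mpr (by nlinarith [hs₀Icc.2])
        nlinarith
      exact le_trans (min_le_right _ _) (le_trans (hge.trans hEs₀) hmono)
  refine ⟨part1, fun hCT t ht => ?_⟩
  have h1 := part1 t ht
  have hlt : ((Real.exp (2*C*t) - 1) / 2) * μ^2 < 1/μ^2 := by
    have hmono : Real.exp (2*C*t) ≤ Real.exp (2*C*T) :=
      Real.exp_le_exp.mpr (by nlinarith [ht.2.le])
    rw [lt_div_iff₀ hμ2]
    have h4 : (0:ℝ) < μ^4 := by positivity
    nlinarith
  by_cases hEt : E t ≤ 1/μ^2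
  · rwa [min_eq_left hEt] at h1
  · push_neg at hEt
    rw [min_eq_right hEt.le] at h1
    linarith
end

section
/- Suppose p' solves the Banach-space ODE δ ∂_t p' + p' = f + q with δ > 0, f, q continuous X-valued functions, and suppose moreover q is Lipschitz with constant L. Then ‖p'(t) − q(t)‖ ≤ e^{-t/δ}(‖p'(0) − q(0)‖ + Lt) + sup_{0<s<t}‖f(s)‖ + Lδ. -/
open MeasureTheory

/-- Estimate from the variation-of-constants formula: if `δ ∂ₜ p' + p' = f + q` in a Banach
space and `q` is Lipschitz with constant `L`, then
`‖p'(t) − q(t)‖ ≤ e^{-t/δ}(‖p'(0) − q(0)‖ + Lt) + sup_{0<s<t} ‖f(s)‖ + Lδ`. -/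
theorem pressure_difference_estimate {X : Type*} [NormedAddCommGroup X] [NormedSpace ℝ X]
    [CompleteSpace X]
    (δ T L : ℝ) (hδ : 0 < δ) (hT : 0 < T) (hL : 0 ≤ L)
    (p dp f q : ℝ → X)
    (hp : ∀ t, HasDerivAt p (dp t) t)
    (hdp : Continuous dp) (hfc : Continuous f) (hqc : Continuous q)
    (hode : ∀ t, δ • dp t + p t = f t + q t)
    (hlip : ∀ s t : ℝ, ‖q s - q t‖ ≤ L * |s - t|) :
    ∀ t ∈ Set.Ico (0:ℝ) T,
      ‖p t - q t‖ ≤ Real.exp (-t/δ) * (‖p 0 - q 0‖ + L * t)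
        + (⨆ s ∈ Set.Ioo (0:ℝ) t, ‖f s‖) + L * δ := by
  intro t ht
  obtain ⟨ht0, htT⟩ := ht
  have hδ' : δ ≠ 0 := ne_of_gt hδ
  set M : ℝ := ⨆ s ∈ Set.Ioo (0:ℝ) t, ‖f s‖ with hMdef
  -- boundedness of the sup
  obtain ⟨C, hC⟩ : ∃ C, ∀ s ∈ Set.Icc (0:ℝ) t, ‖f s‖ ≤ C := by
    obtain ⟨C, hC⟩ := (isCompact_Icc (a := (0:ℝ)) (b := t)).bddAbove_image
      (hfc.norm.continuousOn)
    exact ⟨C, fun s hs => hC ⟨s, hs, rfl⟩⟩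
  have hbdd : BddAbove (Set.range fun s => ⨆ _ : s ∈ Set.Ioo (0:ℝ) t, ‖f s‖) := by
    refine ⟨max C 0, ?_⟩
    rintro x ⟨s, rfl⟩
    show (⨆ _ : s ∈ Set.Ioo (0:ℝ) t, ‖f s‖) ≤ max C 0
    by_cases hs : s ∈ Set.Ioo (0:ℝ) t
    · rw [ciSup_pos hs]
      exact le_max_of_le_left (hC s ⟨le_of_lt hs.1, le_of_lt hs.2⟩)
    · simp [hs]
  have hMf : ∀ s ∈ Set.Ioo (0:ℝ) t, ‖f s‖ ≤ M := by
    intro s hs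
    rw [hMdef]
    have := le_ciSup hbdd s
    rwa [ciSup_pos hs] at this
  have hM0 : 0 ≤ M := by
    have := le_ciSup hbdd t
    have ht' : t ∉ Set.Ioo (0:ℝ) t := fun h => lt_irrefl t h.2
    rw [hMdef]
    simpa [ht'] using this
  -- derivative of the integrating-factor product
  have hu : ∀ s : ℝ, HasDerivAt (fun s => Real.exp (s/δ) • p s)
      (Real.exp (s/δ) • (δ⁻¹ • (f s + q s))) s := by
    intro s
    have hE : HasDerivAt (fun s : ℝ => Real.exp (s/δ)) (δ⁻¹ * Real.exp (s/δ)) s := by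
      have := (Real.hasDerivAt_exp (s/δ)).comp s ((hasDerivAt_id s).div_const δ)
      simpa [mul_comm, div_eq_mul_inv, Function.comp_def] using this
    have h2 := hE.smul (hp s)
    have h1 : dp s = δ⁻¹ • (f s + q s) - δ⁻¹ • p s := by
      have h := hode s
      have h' : δ⁻¹ • (δ • dp s + p s) = δ⁻¹ • (f s + q s) := by rw [h]
      rw [smul_add, smul_smul, inv_mul_cancel₀ hδ', one_smul] at h'
      exact eq_sub_of_add_eq h'
    convert h2 using 1
    · rfl
    rw [h1]
    module
  have hcont : Continuous fun s => Real.exp (s/δ) • (δ⁻¹ • (f s + q s)) :=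
    (Real.continuous_exp.comp (continuous_id.div_const δ)).smul ((hfc.add hqc).const_smul δ⁻¹)
  have hint : Real.exp (t/δ) • p t - p 0
      = ∫ s in (0:ℝ)..t, Real.exp (s/δ) • (δ⁻¹ • (f s + q s)) := by
    have := intervalIntegral.integral_eq_sub_of_hasDerivAt (fun s _ => hu s)
      (hcont.intervalIntegrable 0 t)
    simpa using this.symm
  -- variation of constants
  have hpt : p t = Real.exp (-t/δ) • p 0
      + ∫ s in (0:ℝ)..t, (δ⁻¹ * Real.exp ((s-t)/δ)) • (f s + q s) := by
    have h1 : p t = Real.exp (-t/δ) • (Real.exp (t/δ) • p t) := by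
      rw [smul_smul, ← Real.exp_add]
      simp [neg_div]
    have h2 : Real.exp (t/δ) • p t = p 0 + ∫ s in (0:ℝ)..t,
        Real.exp (s/δ) • (δ⁻¹ • (f s + q s)) := by
      rw [← hint]; abel
    rw [h1, h2, smul_add, ← intervalIntegral.integral_smul]
    congr 1
    apply intervalIntegral.integral_congr
    intro s _
    show Real.exp (-t/δ) • Real.exp (s/δ) • δ⁻¹ • (f s + q s)
      = (δ⁻¹ * Real.exp ((s-t)/δ)) • (f s + q s)
    rw [smul_smul, smul_smul]
    congr 1
    rw [← Real.exp_add]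
    have harg : -t/δ + s/δ = (s-t)/δ := by ring
    rw [harg, mul_comm]
  -- scalar integral of the kernel
  have hker : ∀ s : ℝ, HasDerivAt (fun s => Real.exp ((s-t)/δ))
      (δ⁻¹ * Real.exp ((s-t)/δ)) s := by
    intro s
    have := (Real.hasDerivAt_exp ((s-t)/δ)).comp s
      (((hasDerivAt_id s).sub_const t).div_const δ)
    simpa [mul_comm, div_eq_mul_inv, Function.comp_def] using this
  have hkerc : Continuous fun s : ℝ => δ⁻¹ * Real.exp ((s-t)/δ) :=
    continuous_const.mul (Real.continuous_exp.comp ((continuous_id.sub continuous_const).div_const δ))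
  have hone : ∫ s in (0:ℝ)..t, δ⁻¹ * Real.exp ((s-t)/δ) = 1 - Real.exp (-t/δ) := by
    have := intervalIntegral.integral_eq_sub_of_hasDerivAt (fun s _ => hker s)
      (hkerc.intervalIntegrable 0 t)
    rw [this]
    have h0 : ((0:ℝ) - t)/δ = -t/δ := by ring
    have h1 : (t - t)/δ = (0:ℝ) := by rw [sub_self, zero_div]
    rw [h0, h1, Real.exp_zero]
  -- key identity
  have hqt : q t - Real.exp (-t/δ) • q t
      = ∫ s in (0:ℝ)..t, (δ⁻¹ * Real.exp ((s-t)/δ)) • q t := by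
    rw [intervalIntegral.integral_smul_const, hone, sub_smul, one_smul]
  have hint1 : IntervalIntegrable (fun s => (δ⁻¹ * Real.exp ((s-t)/δ)) • (f s + q s))
      volume 0 t := ((hkerc.smul (hfc.add hqc)).intervalIntegrable 0 t)
  have hint2 : IntervalIntegrable (fun s => (δ⁻¹ * Real.exp ((s-t)/δ)) • q t)
      volume 0 t := ((hkerc.smul continuous_const).intervalIntegrable 0 t)
  have key : p t - q t = Real.exp (-t/δ) • (p 0 - q t)
      + ∫ s in (0:ℝ)..t, (δ⁻¹ * Real.exp ((s-t)/δ)) • (f s + q s - q t) := by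
    have hsub := intervalIntegral.integral_sub hint1 hint2
    have : (∫ s in (0:ℝ)..t, (δ⁻¹ * Real.exp ((s-t)/δ)) • (f s + q s - q t))
        = (∫ s in (0:ℝ)..t, (δ⁻¹ * Real.exp ((s-t)/δ)) • (f s + q s))
          - ∫ s in (0:ℝ)..t, (δ⁻¹ * Real.exp ((s-t)/δ)) • q t := by
      rw [← hsub]
      apply intervalIntegral.integral_congr
      intro s _
      show (δ⁻¹ * Real.exp ((s-t)/δ)) • (f s + q s - q t)
        = (δ⁻¹ * Real.exp ((s-t)/δ)) • (f s + q s) - (δ⁻¹ * Real.exp ((s-t)/δ)) • q t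
      rw [smul_sub]
    rw [this, ← hqt, hpt, smul_sub]
    abel
  -- bound the integral
  have hGle : ‖∫ s in (0:ℝ)..t, (δ⁻¹ * Real.exp ((s-t)/δ)) • (f s + q s - q t)‖
      ≤ M + L * δ := by
    have hGc : Continuous fun s => δ⁻¹ * Real.exp ((s-t)/δ) * (M + L * (t - s)) :=
      hkerc.mul (continuous_const.add (continuous_const.mul
        (continuous_const.sub continuous_id)))
    have hbound : ∀ᵐ s ∂(volume.restrict (Set.uIoc (0:ℝ) t)),
        ‖(δ⁻¹ * Real.exp ((s-t)/δ)) • (f s + q s - q t)‖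
          ≤ δ⁻¹ * Real.exp ((s-t)/δ) * (M + L * (t - s)) := by
      rw [Set.uIoc_of_le ht0, ← Measure.restrict_congr_set Ioo_ae_eq_Ioc]
      refine (ae_restrict_iff' measurableSet_Ioo).2 (Filter.Eventually.of_forall ?_)
      intro s hs
      have hk0 : 0 ≤ δ⁻¹ * Real.exp ((s-t)/δ) :=
        mul_nonneg (inv_nonneg.2 hδ.le) (Real.exp_pos _).le
      rw [norm_smul, Real.norm_eq_abs, abs_of_nonneg hk0]
      have hv : ‖f s + q s - q t‖ ≤ M + L * (t - s) := by
        have h1 : ‖f s + q s - q t‖ ≤ ‖f s‖ + ‖q s - q t‖ := by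
          have : f s + q s - q t = f s + (q s - q t) := by abel
          rw [this]; exact norm_add_le _ _
        have h2 : ‖q s - q t‖ ≤ L * (t - s) := by
          have := hlip s t
          rwa [abs_of_nonpos (by linarith [hs.2] : s - t ≤ 0), neg_sub] at this
        exact h1.trans (add_le_add (hMf s hs) h2)
      exact mul_le_mul_of_nonneg_left hv hk0
    have := intervalIntegral.norm_integral_le_abs_of_norm_le hbound
      (hGc.intervalIntegrable 0 t)
    refine this.trans ?_
    -- compute the scalar integral
    have hF : ∀ s : ℝ, HasDerivAt (fun s => Real.exp ((s-t)/δ) * (M + L * (t - s + δ)))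
        (δ⁻¹ * Real.exp ((s-t)/δ) * (M + L * (t - s))) s := by
      intro s
      have h2 : HasDerivAt (fun s : ℝ => M + L * (t - s + δ)) (-L) s := by
        have h3 := (hasDerivAt_const s M).add
          ((((hasDerivAt_const s t).sub (hasDerivAt_id s)).add_const δ).const_mul L)
        rw [show (0:ℝ) + L * (0 - 1) = -L by ring] at h3
        exact h3
      have := (hker s).mul h2
      refine this.congr_deriv ?_
      have hinv := inv_mul_cancel₀ hδ'
      linear_combination (Real.exp ((s-t)/δ) * L) * hinv
    have hval : ∫ s in (0:ℝ)..t, δ⁻¹ * Real.exp ((s-t)/δ) * (M + L * (t - s))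
        = (M + L * δ) - Real.exp (-t/δ) * (M + L * (t + δ)) := by
      rw [intervalIntegral.integral_eq_sub_of_hasDerivAt (fun s _ => hF s)
        (hGc.intervalIntegrable 0 t)]
      have h0 : ((0:ℝ) - t)/δ = -t/δ := by ring
      have h1 : (t - t)/δ = (0:ℝ) := by rw [sub_self, zero_div]
      rw [h0, h1, Real.exp_zero]
      ring
    have hnn : 0 ≤ ∫ s in (0:ℝ)..t, δ⁻¹ * Real.exp ((s-t)/δ) * (M + L * (t - s)) := by
      apply intervalIntegral.integral_nonneg ht0
      intro s hs
      have : 0 ≤ M + L * (t - s) := by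
        have : 0 ≤ L * (t - s) := mul_nonneg hL (by linarith [hs.2])
        linarith
      exact mul_nonneg (mul_nonneg (inv_nonneg.2 hδ.le) (Real.exp_pos _).le) this
    rw [abs_of_nonneg hnn, hval]
    have hE : 0 ≤ Real.exp (-t/δ) * (M + L * (t + δ)) := by
      apply mul_nonneg (Real.exp_pos _).le
      have : 0 ≤ L * (t + δ) := mul_nonneg hL (by linarith)
      linarith
    linarith
  -- put everything together
  calc ‖p t - q t‖
      ≤ Real.exp (-t/δ) * ‖p 0 - q t‖
        + ‖∫ s in (0:ℝ)..t, (δ⁻¹ * Real.exp ((s-t)/δ)) • (f s + q s - q t)‖ := by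
        rw [key]
        refine (norm_add_le _ _).trans ?_
        rw [norm_smul, Real.norm_eq_abs, abs_of_nonneg (Real.exp_pos _).le]
    _ ≤ Real.exp (-t/δ) * (‖p 0 - q 0‖ + L * t) + (M + L * δ) := by
        have h1 : ‖p 0 - q t‖ ≤ ‖p 0 - q 0‖ + L * t := by
          have : p 0 - q t = (p 0 - q 0) + (q 0 - q t) := by abel
          rw [this]
          refine (norm_add_le _ _).trans ?_
          have := hlip 0 t
          rw [zero_sub, abs_neg, abs_of_nonneg ht0] at this
          linarith
        exact add_le_add (mul_le_mul_of_nonneg_left h1 (Real.exp_pos _).le) hGle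
    _ = Real.exp (-t/δ) * (‖p 0 - q 0‖ + L * t) + M + L * δ := by ring
end

section
/- There is a constant C such that for all v ∈ H^2(T^2;R^2): ‖∇²(v⊗v)‖_{L^2}² ≤ C(‖v‖_{L^2} ‖∇²v‖_{L^2}³ + ‖v‖_{L^2}³ ‖∇²v‖_{L^2}), where v⊗v is the matrix with entries v_i v_j. -/
open MeasureTheory Set
open scoped BigOperators

/-- Components of a vector field on `ℝ²`. -/
noncomputable def vcomp (v : ℝ × ℝ → ℝ × ℝ) : Fin 2 → ℝ × ℝ → ℝ :=
  ![fun y => (v y).1, fun y => (v y).2]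

/-- Partial derivative in the `i`-th coordinate direction. -/
noncomputable def pdd (i : Fin 2) (f : ℝ × ℝ → ℝ) (x : ℝ × ℝ) : ℝ :=
  fderiv ℝ f x (![((1:ℝ),(0:ℝ)), ((0:ℝ),(1:ℝ))] i)

local notation "I01" => Set.Icc (0:ℝ) 1
local notation "Q2" => Set.Icc (0:ℝ×ℝ) (1:ℝ×ℝ)

namespace HTS

lemma pdd_contDiff {n : ℕ} {f : ℝ × ℝ → ℝ} (hf : ContDiff ℝ (n+1) f) (i : Fin 2) :
    ContDiff ℝ n (pdd i f) := by
  have h1 : ContDiff ℝ n (fderiv ℝ f) := hf.fderiv_right (by exact_mod_cast le_refl _)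
  exact (ContinuousLinearMap.apply ℝ ℝ (![((1:ℝ),(0:ℝ)), ((0:ℝ),(1:ℝ))] i)).contDiff.comp h1

lemma pdd_continuous {f : ℝ × ℝ → ℝ} (hf : ContDiff ℝ 1 f) (i : Fin 2) :
    Continuous (pdd i f) := by
  have : ContDiff ℝ (0+1) f := by exact_mod_cast hf
  exact (pdd_contDiff this i).continuous

lemma slice0 {f : ℝ × ℝ → ℝ} (hf : Differentiable ℝ f) (t y : ℝ) :
    HasDerivAt (fun s => f (s, y)) (pdd 0 f (t, y)) t := by
  have hι : HasDerivAt (fun s : ℝ => ((s, y) : ℝ × ℝ)) ((1:ℝ), (0:ℝ)) t :=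
    (hasDerivAt_id t).prodMk (hasDerivAt_const t y)
  have := (hf (t, y)).hasFDerivAt.comp_hasDerivAt t hι
  simpa [pdd, Function.comp_def] using this

lemma slice1 {f : ℝ × ℝ → ℝ} (hf : Differentiable ℝ f) (s u : ℝ) :
    HasDerivAt (fun y => f (s, y)) (pdd 1 f (s, u)) u := by
  have hι : HasDerivAt (fun y : ℝ => ((s, y) : ℝ × ℝ)) ((0:ℝ), (1:ℝ)) u :=
    (hasDerivAt_const u s).prodMk (hasDerivAt_id u)
  have := (hf (s, u)).hasFDerivAt.comp_hasDerivAt u hι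
  simpa [pdd, Function.comp_def] using this

lemma pdd_periodic {f : ℝ × ℝ → ℝ} (hf : Differentiable ℝ f) (p : ℝ × ℝ)
    (hper : ∀ x, f (x + p) = f x) (i : Fin 2) (x : ℝ × ℝ) :
    pdd i f (x + p) = pdd i f x := by
  have h1 : HasFDerivAt (fun y : ℝ × ℝ => y + p) (ContinuousLinearMap.id ℝ (ℝ × ℝ)) x :=
    (hasFDerivAt_id x).add_const p
  have h2 : HasFDerivAt (fun y : ℝ × ℝ => f (y + p))
      ((fderiv ℝ f (x + p)).comp (ContinuousLinearMap.id ℝ (ℝ × ℝ))) x :=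
    (hf (x + p)).hasFDerivAt.comp x h1
  have h3 : HasFDerivAt f (fderiv ℝ f (x + p)) x := by
    simpa [funext hper, ContinuousLinearMap.comp_id] using h2
  simp [pdd, h3.fderiv]

lemma Q_eq_prod : (Set.Icc (0:ℝ×ℝ) (1:ℝ×ℝ)) = I01 ×ˢ I01 := by
  rw [Set.Icc_prod_Icc]; rfl

lemma intgQ {φ : ℝ × ℝ → ℝ} (hφ : Continuous φ) : IntegrableOn φ Q2 :=
  hφ.continuousOn.integrableOn_compact isCompact_Icc

lemma intgI {φ : ℝ → ℝ} (hφ : Continuous φ) : IntegrableOn φ I01 :=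
  hφ.continuousOn.integrableOn_compact isCompact_Icc

lemma setIcc_eq_ii (g : ℝ → ℝ) : ∫ u in I01, g u = ∫ u in (0:ℝ)..1, g u := by
  rw [intervalIntegral.integral_of_le zero_le_one, integral_Icc_eq_integral_Ioc]

lemma restrict_Q_eq :
    (volume : Measure (ℝ×ℝ)).restrict (I01 ×ˢ I01)
      = ((volume : Measure ℝ).restrict I01).prod ((volume : Measure ℝ).restrict I01) := by
  rw [Measure.prod_restrict]; rfl

/-- Fubini (first variable outer). -/
lemma fub1 {φ : ℝ × ℝ → ℝ} (hφ : Continuous φ) :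
    ∫ x in Q2, φ x = ∫ s in I01, ∫ u in I01, φ (s, u) := by
  have h := intgQ hφ
  rw [Q_eq_prod] at h ⊢
  have h2 : Integrable φ (((volume : Measure ℝ).restrict I01).prod
      ((volume : Measure ℝ).restrict I01)) := by
    rw [Measure.prod_restrict]; exact h
  rw [show (∫ x in I01 ×ˢ I01, φ x) = ∫ x, φ x ∂(((volume : Measure ℝ).restrict I01).prod
      ((volume : Measure ℝ).restrict I01)) from by rw [restrict_Q_eq]]
  exact MeasureTheory.integral_prod _ h2

/-- Fubini (second variable outer). -/
lemma fub2 {φ : ℝ × ℝ → ℝ} (hφ : Continuous φ) :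
    ∫ x in Q2, φ x = ∫ u in I01, ∫ s in I01, φ (s, u) := by
  have h := intgQ hφ
  rw [Q_eq_prod] at h ⊢
  have h2 : Integrable φ (((volume : Measure ℝ).restrict I01).prod
      ((volume : Measure ℝ).restrict I01)) := by
    rw [Measure.prod_restrict]; exact h
  rw [show (∫ x in I01 ×ˢ I01, φ x) = ∫ x, φ x ∂(((volume : Measure ℝ).restrict I01).prod
      ((volume : Measure ℝ).restrict I01)) from by rw [restrict_Q_eq]]
  rw [MeasureTheory.integral_prod _ h2]
  exact MeasureTheory.integral_integral_swap h2

/-- 1-D sup lemma: `|h t| ≤ ∫|h| + ∫|h'|` on `[0,1]`. -/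
lemma sup1D {h h' : ℝ → ℝ} (hd : ∀ t, HasDerivAt h (h' t) t) (hc' : Continuous h')
    (hc : Continuous h) {t : ℝ} (ht : t ∈ I01) :
    |h t| ≤ (∫ u in I01, |h u|) + ∫ u in I01, |h' u| := by
  have key : ∀ u ∈ I01, |h t| ≤ |h u| + ∫ s in I01, |h' s| := by
    intro u hu
    have hftc : ∫ s in u..t, h' s = h t - h u :=
      intervalIntegral.integral_eq_sub_of_hasDerivAt (fun x _ => hd x)
        (hc'.intervalIntegrable u t)
    have h1 : |∫ s in u..t, h' s| ≤ ∫ s in Set.uIoc u t, |h' s| := by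
      simpa [Real.norm_eq_abs] using
        intervalIntegral.norm_integral_le_integral_norm_uIoc (μ := volume) (f := h') (a := u) (b := t)
    have hsub : Set.uIoc u t ⊆ Ioc (0:ℝ) 1 := by
      apply Set.Ioc_subset_Ioc
      · exact le_min hu.1 ht.1
      · exact max_le hu.2 ht.2
    have h2 : ∫ s in Set.uIoc u t, |h' s| ≤ ∫ s in Ioc (0:ℝ) 1, |h' s| := by
      apply setIntegral_mono_set ((intgI hc'.abs).mono_set Ioc_subset_Icc_self)
      · filter_upwards with x using abs_nonneg _
      · exact HasSubset.Subset.eventuallyLE hsub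
    have h3 : |h t - h u| ≤ ∫ s in I01, |h' s| := by
      rw [← hftc, integral_Icc_eq_integral_Ioc]
      exact le_trans h1 h2
    have h4 := abs_sub_abs_le_abs_sub (h t) (h u)
    linarith
  have hmono : ∫ u in I01, |h t| ≤ ∫ u in I01, (|h u| + ∫ s in I01, |h' s|) := by
    apply setIntegral_mono_on ?_ ?_ measurableSet_Icc key
    · exact integrableOn_const (by simp [Real.volume_Icc])
    · exact (intgI hc.abs).add (integrableOn_const (by simp [Real.volume_Icc]))
  have hL : ∫ u in I01, |h t| = |h t| := by
    simp [setIntegral_const, Real.volume_Icc]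
  have hR : ∫ u in I01, (|h u| + ∫ s in I01, |h' s|) =
      (∫ u in I01, |h u|) + ∫ s in I01, |h' s| := by
    rw [integral_add (intgI hc.abs) (integrableOn_const (by simp [Real.volume_Icc]))]
    simp [setIntegral_const, Real.volume_Icc]
  rw [hL, hR] at hmono
  exact hmono

lemma int_abs_le {φ : ℝ × ℝ → ℝ} (hφ : Continuous φ) :
    ∫ x in Q2, φ x ≤ ∫ x in Q2, |φ x| :=
  setIntegral_mono_on (intgQ hφ) (intgQ hφ.abs) measurableSet_Icc fun x _ => le_abs_self _

lemma int_neg_abs_le {φ : ℝ × ℝ → ℝ} (hφ : Continuous φ) :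
    -∫ x in Q2, φ x ≤ ∫ x in Q2, |φ x| := by
  rw [← integral_neg]
  exact setIntegral_mono_on (intgQ hφ.neg) (intgQ hφ.abs) measurableSet_Icc
    fun x _ => neg_le_abs _

/-- Cauchy–Schwarz. -/
lemma csQ {f g : ℝ × ℝ → ℝ} (hf : Continuous f) (hg : Continuous g) :
    ∫ x in Q2, |f x * g x| ≤
      Real.sqrt (∫ x in Q2, (f x)^2) * Real.sqrt (∫ x in Q2, (g x)^2) := by
  set A := ∫ x in Q2, (f x)^2 with hA
  set C := ∫ x in Q2, (g x)^2 with hC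
  set B := ∫ x in Q2, |f x * g x| with hB
  have hA0 : 0 ≤ A := setIntegral_nonneg measurableSet_Icc fun x _ => sq_nonneg _
  have hC0 : 0 ≤ C := setIntegral_nonneg measurableSet_Icc fun x _ => sq_nonneg _
  have hB0 : 0 ≤ B := setIntegral_nonneg measurableSet_Icc fun x _ => abs_nonneg _
  have expand : ∀ L : ℝ, 0 ≤ C * (L * L) + (-2 * B) * L + A := by
    intro L
    have e1 : ∀ x : ℝ × ℝ, (|f x| - L * |g x|)^2
        = ((f x)^2 + L^2 * (g x)^2) - 2 * L * |f x * g x| := by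
      intro x
      have h1 : (|f x| - L * |g x|)^2
          = (|f x|^2 + L^2 * |g x|^2) - 2 * L * (|f x| * |g x|) := by ring
      rw [h1, sq_abs, sq_abs, abs_mul]
    have e2 : (0:ℝ) ≤ ∫ x in Q2, (|f x| - L * |g x|)^2 :=
      setIntegral_nonneg measurableSet_Icc fun x _ => sq_nonneg _
    have i1 : IntegrableOn (fun x => (f x)^2 + L^2 * (g x)^2) Q2 := intgQ (by fun_prop)
    have i2 : IntegrableOn (fun x => 2 * L * |f x * g x|) Q2 := intgQ (by fun_prop)
    have e3 : ∫ x in Q2, (|f x| - L * |g x|)^2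
        = (A + L^2 * C) - 2 * L * B := by
      rw [show (fun x => (|f x| - L * |g x|)^2)
          = fun x => ((f x)^2 + L^2 * (g x)^2) - 2 * L * |f x * g x| from funext e1]
      rw [integral_sub i1 i2,
        integral_add (intgQ (φ := fun x => f x ^ 2) (hf.pow 2)) ((intgQ (φ := fun x => g x ^ 2) (hg.pow 2)).const_mul (L^2)),
        integral_const_mul, integral_const_mul]
    rw [e3] at e2
    nlinarith [e2]
  have hd := discrim_le_zero expand
  rw [discrim] at hd
  have hBAC : B^2 ≤ A * C := by nlinarith [hd]
  have : B ≤ Real.sqrt (A * C) := by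
    have hs := Real.sq_sqrt (mul_nonneg hA0 hC0)
    nlinarith [Real.sqrt_nonneg (A * C)]
  rwa [Real.sqrt_mul hA0] at this

/-- Integration by parts on the periodic square. -/
lemma ibp (a : Fin 2) {f g : ℝ × ℝ → ℝ} (hf : ContDiff ℝ 1 f) (hg : ContDiff ℝ 1 g)
    (hfp1 : ∀ x, f (x + (1,0)) = f x) (hfp2 : ∀ x, f (x + (0,1)) = f x)
    (hgp1 : ∀ x, g (x + (1,0)) = g x) (hgp2 : ∀ x, g (x + (0,1)) = g x) :
    ∫ x in Q2, (pdd a f x * g x + f x * pdd a g x) = 0 := by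
  have hdf := hf.differentiable one_ne_zero
  have hdg := hg.differentiable one_ne_zero
  have hcont : Continuous fun x => pdd a f x * g x + f x * pdd a g x :=
    ((pdd_continuous hf a).mul hg.continuous).add (hf.continuous.mul (pdd_continuous hg a))
  fin_cases a
  · simp only [Fin.zero_eta] at hcont ⊢
    rw [fub2 hcont]
    have inner : ∀ u : ℝ,
        (∫ s in I01, (pdd 0 f (s,u) * g (s,u) + f (s,u) * pdd 0 g (s,u))) = 0 := by
      intro u
      rw [setIcc_eq_ii]
      have hder : ∀ s : ℝ, HasDerivAt (fun s => f (s,u) * g (s,u))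
          (pdd 0 f (s,u) * g (s,u) + f (s,u) * pdd 0 g (s,u)) s := fun s =>
        (slice0 hdf s u).mul (slice0 hdg s u)
      rw [intervalIntegral.integral_eq_sub_of_hasDerivAt (fun s _ => hder s)
        (Continuous.intervalIntegrable (by
          exact ((pdd_continuous hf 0).comp (by fun_prop)).mul (hg.continuous.comp (by fun_prop))
            |>.add ((hf.continuous.comp (by fun_prop)).mul
              ((pdd_continuous hg 0).comp (by fun_prop)))) 0 1)]
      have e1 : ((1:ℝ), u) = ((0:ℝ), u) + ((1:ℝ), (0:ℝ)) := by simp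
      rw [e1, hfp1, hgp1, sub_self]
    simp only [inner, integral_zero]
  · simp only [Fin.mk_one] at hcont ⊢
    rw [fub1 hcont]
    have inner : ∀ s : ℝ,
        (∫ u in I01, (pdd 1 f (s,u) * g (s,u) + f (s,u) * pdd 1 g (s,u))) = 0 := by
      intro s
      rw [setIcc_eq_ii]
      have hder : ∀ u : ℝ, HasDerivAt (fun u => f (s,u) * g (s,u))
          (pdd 1 f (s,u) * g (s,u) + f (s,u) * pdd 1 g (s,u)) u := fun u =>
        (slice1 hdf s u).mul (slice1 hdg s u)
      rw [intervalIntegral.integral_eq_sub_of_hasDerivAt (fun u _ => hder u)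
        (Continuous.intervalIntegrable (by
          exact ((pdd_continuous hf 1).comp (by fun_prop)).mul (hg.continuous.comp (by fun_prop))
            |>.add ((hf.continuous.comp (by fun_prop)).mul
              ((pdd_continuous hg 1).comp (by fun_prop)))) 0 1)]
      have e1 : ((s:ℝ), (1:ℝ)) = ((s:ℝ), (0:ℝ)) + ((0:ℝ), (1:ℝ)) := by simp
      rw [e1, hfp2, hgp2, sub_self]
    simp only [inner, integral_zero]

lemma contDiff_one_of_two {f : ℝ × ℝ → ℝ} (hf : ContDiff ℝ 2 f) : ContDiff ℝ (1+1) f := by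
  exact_mod_cast hf

/-- `‖∂f‖₂² ≤ ‖f‖₂ ‖∂∂f‖₂`. -/
lemma grad_sq {f : ℝ × ℝ → ℝ} (hf2 : ContDiff ℝ 2 f)
    (hp1 : ∀ x, f (x + (1,0)) = f x) (hp2 : ∀ x, f (x + (0,1)) = f x) (c : Fin 2) :
    ∫ x in Q2, (pdd c f x)^2 ≤
      Real.sqrt (∫ x in Q2, (f x)^2) * Real.sqrt (∫ x in Q2, (pdd c (pdd c f) x)^2) := by
  have hf1 : ContDiff ℝ 1 f := hf2.of_le one_le_two
  have hdf := hf1.differentiable one_ne_zero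
  have hg1 : ContDiff ℝ 1 (pdd c f) := pdd_contDiff (contDiff_one_of_two hf2) c
  have hgp1 : ∀ x, pdd c f (x+(1,0)) = pdd c f x := pdd_periodic hdf _ hp1 c
  have hgp2 : ∀ x, pdd c f (x+(0,1)) = pdd c f x := pdd_periodic hdf _ hp2 c
  have h0 := ibp c hf1 hg1 hp1 hp2 hgp1 hgp2
  have i1 : IntegrableOn (fun x => pdd c f x * pdd c f x) Q2 :=
    intgQ ((pdd_continuous hf1 c).mul (pdd_continuous hf1 c))
  have i2 : IntegrableOn (fun x => f x * pdd c (pdd c f) x) Q2 :=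
    intgQ (hf1.continuous.mul (pdd_continuous hg1 c))
  rw [integral_add i1 i2] at h0
  have e : ∫ x in Q2, (pdd c f x)^2 = - ∫ x in Q2, f x * pdd c (pdd c f) x := by
    simp only [sq]; linarith
  rw [e]
  exact (int_neg_abs_le (hf1.continuous.mul (pdd_continuous hg1 c))).trans
    (csQ hf1.continuous (pdd_continuous hg1 c))

/-- Integrability of the partial integral in the first variable. -/
lemma Jint1 {G : ℝ × ℝ → ℝ} (hG : Continuous G) (hpos : ∀ z, 0 ≤ G z) :
    IntegrableOn (fun s => ∫ u in I01, G (s, u)) I01 := by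
  obtain ⟨M, hM⟩ := (isCompact_Icc (a := (0:ℝ×ℝ)) (b := 1)).exists_bound_of_continuousOn
    hG.continuousOn
  have hsm : StronglyMeasurable fun s => ∫ u in I01, G (s, u) :=
    hG.stronglyMeasurable.integral_prod_right'
  apply Integrable.mono' (g := fun _ => M)
    (integrableOn_const (by simp [Real.volume_Icc]))
    hsm.aestronglyMeasurable
  rw [ae_restrict_iff' measurableSet_Icc]
  filter_upwards with s hs
  have : ‖∫ u in I01, G (s, u)‖ ≤ M * (volume I01).toReal := by
    apply norm_setIntegral_le_of_norm_le_const (by simp [Real.volume_Icc])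
    · intro u hu
      exact hM (s, u) (by rw [Q_eq_prod]; exact ⟨hs, hu⟩)
  simpa [Real.volume_Icc] using this

/-- Integrability of the partial integral in the second variable. -/
lemma Jint2 {G : ℝ × ℝ → ℝ} (hG : Continuous G) (hpos : ∀ z, 0 ≤ G z) :
    IntegrableOn (fun u => ∫ s in I01, G (s, u)) I01 := by
  obtain ⟨M, hM⟩ := (isCompact_Icc (a := (0:ℝ×ℝ)) (b := 1)).exists_bound_of_continuousOn
    hG.continuousOn
  have hsm : StronglyMeasurable fun u => ∫ s in I01, G (s, u) :=
    hG.stronglyMeasurable.integral_prod_left'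
  apply Integrable.mono' (g := fun _ => M)
    (integrableOn_const (by simp [Real.volume_Icc]))
    hsm.aestronglyMeasurable
  rw [ae_restrict_iff' measurableSet_Icc]
  filter_upwards with u hu
  have : ‖∫ s in I01, G (s, u)‖ ≤ M * (volume I01).toReal := by
    apply norm_setIntegral_le_of_norm_le_const (by simp [Real.volume_Icc])
    · intro s hs
      exact hM (s, u) (by rw [Q_eq_prod]; exact ⟨hs, hu⟩)
  simpa [Real.volume_Icc] using this

lemma pdd_sq {w : ℝ × ℝ → ℝ} (hw : Differentiable ℝ w) (c : Fin 2) (x : ℝ × ℝ) :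
    pdd c (fun y => (w y)^2) x = 2 * w x * pdd c w x := by
  have e : (fun y => (w y)^2) = fun y => w y * w y := funext fun y => sq (w y)
  rw [pdd, e, fderiv_fun_mul (hw x) (hw x)]
  simp [ContinuousLinearMap.add_apply, ContinuousLinearMap.smul_apply, pdd]
  ring


lemma contL {φ : ℝ × ℝ → ℝ} (hφ : Continuous φ) (u : ℝ) : Continuous fun s => φ (s, u) :=
  hφ.comp (continuous_id.prodMk continuous_const)

lemma contR {φ : ℝ × ℝ → ℝ} (hφ : Continuous φ) (s : ℝ) : Continuous fun u => φ (s, u) :=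
  hφ.comp (continuous_const.prodMk continuous_id)

/-- `L^∞` bound on the unit square. -/
lemma linf {F : ℝ × ℝ → ℝ} (hF : ContDiff ℝ 2 F) {x : ℝ × ℝ} (hx : x ∈ Q2) :
    |F x| ≤ ∫ z in Q2,
      ((|F z| + |pdd 1 F z|) + (|pdd 0 F z| + |pdd 1 (pdd 0 F) z|)) := by
  have hF1 : ContDiff ℝ 1 F := hF.of_le one_le_two
  have hdF := hF1.differentiable one_ne_zero
  have hG1 : ContDiff ℝ 1 (pdd 0 F) := pdd_contDiff (contDiff_one_of_two hF) 0
  have hdG := hG1.differentiable one_ne_zero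
  have hcF := hF1.continuous
  have hc0 := pdd_continuous hF1 0
  have hc1 := pdd_continuous hF1 1
  have hc10 := pdd_continuous hG1 1
  obtain ⟨x1, x2⟩ := x
  rw [Q_eq_prod] at hx
  obtain ⟨hx1, hx2⟩ := hx
  have step1 : |F (x1, x2)| ≤ (∫ s in I01, |F (s, x2)|) + ∫ s in I01, |pdd 0 F (s, x2)| :=
    sup1D (fun s => slice0 hdF s x2) (contL hc0 x2) (contL hcF x2) hx1
  have step2a : ∀ s : ℝ, |F (s, x2)| ≤ ∫ u in I01, (|F (s, u)| + |pdd 1 F (s, u)|) := by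
    intro s
    have h := sup1D (fun u => slice1 hdF s u) (contR hc1 s) (contR hcF s) hx2
    rwa [← integral_add (intgI (contR hcF s).abs) (intgI (contR hc1 s).abs)] at h
  have step2b : ∀ s : ℝ, |pdd 0 F (s, x2)| ≤
      ∫ u in I01, (|pdd 0 F (s, u)| + |pdd 1 (pdd 0 F) (s, u)|) := by
    intro s
    have h := sup1D (fun u => slice1 hdG s u) (contR hc10 s) (contR hc0 s) hx2
    rwa [← integral_add (intgI (contR hc0 s).abs) (intgI (contR hc10 s).abs)] at h
  have m1 : ∫ s in I01, |F (s, x2)| ≤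
      ∫ s in I01, ∫ u in I01, (|F (s, u)| + |pdd 1 F (s, u)|) := by
    apply setIntegral_mono_on (intgI (contL hcF x2).abs)
      (Jint1 (G := fun z => |F z| + |pdd 1 F z|) (hcF.abs.add hc1.abs)
        (fun z => by positivity)) measurableSet_Icc
    exact fun s _ => step2a s
  have m2 : ∫ s in I01, |pdd 0 F (s, x2)| ≤
      ∫ s in I01, ∫ u in I01, (|pdd 0 F (s, u)| + |pdd 1 (pdd 0 F) (s, u)|) := by
    apply setIntegral_mono_on (intgI (contL hc0 x2).abs)
      (Jint1 (G := fun z => |pdd 0 F z| + |pdd 1 (pdd 0 F) z|) (hc0.abs.add hc10.abs)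
        (fun z => by positivity)) measurableSet_Icc
    exact fun s _ => step2b s
  have e1 : ∫ z in Q2, (|F z| + |pdd 1 F z|) =
      ∫ s in I01, ∫ u in I01, (|F (s, u)| + |pdd 1 F (s, u)|) := fub1 (hcF.abs.add hc1.abs)
  have e2 : ∫ z in Q2, (|pdd 0 F z| + |pdd 1 (pdd 0 F) z|) =
      ∫ s in I01, ∫ u in I01, (|pdd 0 F (s, u)| + |pdd 1 (pdd 0 F) (s, u)|) :=
    fub1 (hc0.abs.add hc10.abs)
  rw [integral_add (intgQ (hcF.abs.fun_add hc1.abs)) (intgQ (hc0.abs.fun_add hc10.abs)), e1, e2]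
  linarith

/-- Ladyzhenskaya-type bound. -/
lemma lady {w : ℝ × ℝ → ℝ} (hw : ContDiff ℝ 1 w) :
    ∫ z in Q2, (w z)^4 ≤
      (∫ z in Q2, ((w z)^2 + 2 * |w z * pdd 0 w z|)) *
      (∫ z in Q2, ((w z)^2 + 2 * |w z * pdd 1 w z|)) := by
  have hdw := hw.differentiable one_ne_zero
  set W : ℝ × ℝ → ℝ := fun z => (w z)^2 with hWdef
  have hW1 : ContDiff ℝ 1 W := hw.pow 2
  have hdW := hW1.differentiable one_ne_zero
  have hcW := hW1.continuous
  have hc0 := pdd_continuous hW1 0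
  have hc1 := pdd_continuous hW1 1
  set A : ℝ → ℝ := fun u => ∫ s in I01, (W (s, u) + |pdd 0 W (s, u)|) with hAdef
  set B : ℝ → ℝ := fun s => ∫ u in I01, (W (s, u) + |pdd 1 W (s, u)|) with hBdef
  have hAint : IntegrableOn A I01 :=
    Jint2 (G := fun z => W z + |pdd 0 W z|) (hcW.add hc0.abs)
      (fun z => add_nonneg (sq_nonneg _) (abs_nonneg _))
  have hBint : IntegrableOn B I01 :=
    Jint1 (G := fun z => W z + |pdd 1 W z|) (hcW.add hc1.abs)
      (fun z => add_nonneg (sq_nonneg _) (abs_nonneg _))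
  have hWA : ∀ z ∈ I01 ×ˢ I01, W z ≤ A z.2 := by
    rintro ⟨s, u⟩ ⟨hs, hu⟩
    have h := sup1D (h := fun s' => W (s', u)) (fun s' => slice0 hdW s' u)
      (contL hc0 u) (contL hcW u) hs
    rw [← integral_add (intgI (contL hcW u).abs) (intgI (contL hc0 u).abs)] at h
    calc W (s, u) ≤ |W (s, u)| := le_abs_self _
      _ ≤ ∫ s' in I01, (|W (s', u)| + |pdd 0 W (s', u)|) := h
      _ = A u := by
          apply setIntegral_congr_fun measurableSet_Icc
          intro s' _
          show |W (s', u)| + |pdd 0 W (s', u)| = W (s', u) + |pdd 0 W (s', u)|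
          rw [abs_of_nonneg (sq_nonneg (w (s', u)) : (0:ℝ) ≤ W (s', u))]
  have hWB : ∀ z ∈ I01 ×ˢ I01, W z ≤ B z.1 := by
    rintro ⟨s, u⟩ ⟨hs, hu⟩
    have h := sup1D (h := fun u' => W (s, u')) (fun u' => slice1 hdW s u')
      (contR hc1 s) (contR hcW s) hu
    rw [← integral_add (intgI (contR hcW s).abs) (intgI (contR hc1 s).abs)] at h
    calc W (s, u) ≤ |W (s, u)| := le_abs_self _
      _ ≤ ∫ u' in I01, (|W (s, u')| + |pdd 1 W (s, u')|) := h
      _ = B s := by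
          apply setIntegral_congr_fun measurableSet_Icc
          intro u' _
          show |W (s, u')| + |pdd 1 W (s, u')| = W (s, u') + |pdd 1 W (s, u')|
          rw [abs_of_nonneg (sq_nonneg (w (s, u')) : (0:ℝ) ≤ W (s, u'))]
  have hA0 : ∀ u, 0 ≤ A u := fun u => setIntegral_nonneg measurableSet_Icc
    (fun s _ => add_nonneg (sq_nonneg _) (abs_nonneg _))
  have hB0 : ∀ s, 0 ≤ B s := fun s => setIntegral_nonneg measurableSet_Icc
    (fun u _ => add_nonneg (sq_nonneg _) (abs_nonneg _))
  have hprodint : IntegrableOn (fun z : ℝ × ℝ => B z.1 * A z.2) Q2 := by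
    rw [IntegrableOn, Q_eq_prod, restrict_Q_eq]
    exact hBint.mul_prod hAint
  have hmono : ∫ z in Q2, (w z)^4 ≤ ∫ z in Q2, B z.1 * A z.2 := by
    apply setIntegral_mono_on (intgQ ((hw.continuous.pow 4))) hprodint measurableSet_Icc
    intro z hz
    rw [Q_eq_prod] at hz
    have h1 := hWA z hz
    have h2 := hWB z hz
    have hW0 : 0 ≤ W z := sq_nonneg _
    calc (w z)^4 = W z * W z := by rw [hWdef]; ring
      _ ≤ B z.1 * A z.2 := mul_le_mul h2 h1 hW0 (hB0 z.1)
  have hsplit : ∫ z in Q2, B z.1 * A z.2 = (∫ s in I01, B s) * ∫ u in I01, A u := by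
    rw [show ((volume : Measure (ℝ×ℝ)).restrict Q2)
        = (((volume : Measure ℝ).restrict I01).prod ((volume : Measure ℝ).restrict I01)) from by
      rw [Q_eq_prod, restrict_Q_eq]]
    exact integral_prod_mul B A
  have eB : ∫ s in I01, B s = ∫ z in Q2, (W z + |pdd 1 W z|) :=
    (fub1 (hcW.add hc1.abs)).symm
  have eA : ∫ u in I01, A u = ∫ z in Q2, (W z + |pdd 0 W z|) :=
    (fub2 (hcW.add hc0.abs)).symm
  have eW0 : ∫ z in Q2, (W z + |pdd 0 W z|) = ∫ z in Q2, ((w z)^2 + 2 * |w z * pdd 0 w z|) := by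
    apply setIntegral_congr_fun measurableSet_Icc
    intro z _
    show W z + |pdd 0 W z| = w z ^ 2 + 2 * |w z * pdd 0 w z|
    rw [show pdd 0 W z = 2 * w z * pdd 0 w z from by rw [hWdef]; exact pdd_sq hdw 0 z]
    rw [show |2 * w z * pdd 0 w z| = 2 * |w z * pdd 0 w z| from by
      rw [mul_assoc, abs_mul, abs_two]]
  have eW1 : ∫ z in Q2, (W z + |pdd 1 W z|) = ∫ z in Q2, ((w z)^2 + 2 * |w z * pdd 1 w z|) := by
    apply setIntegral_congr_fun measurableSet_Icc
    intro z _
    show W z + |pdd 1 W z| = w z ^ 2 + 2 * |w z * pdd 1 w z|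
    rw [show pdd 1 W z = 2 * w z * pdd 1 w z from by rw [hWdef]; exact pdd_sq hdw 1 z]
    rw [show |2 * w z * pdd 1 w z| = 2 * |w z * pdd 1 w z| from by
      rw [mul_assoc, abs_mul, abs_two]]
  calc ∫ z in Q2, (w z)^4 ≤ ∫ z in Q2, B z.1 * A z.2 := hmono
    _ = (∫ s in I01, B s) * ∫ u in I01, A u := hsplit
    _ = (∫ z in Q2, ((w z)^2 + 2 * |w z * pdd 1 w z|)) *
        (∫ z in Q2, ((w z)^2 + 2 * |w z * pdd 0 w z|)) := by rw [eB, eA, eW0, eW1]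
    _ = _ := mul_comm _ _

lemma pdd_mul {f g : ℝ × ℝ → ℝ} (hf : Differentiable ℝ f) (hg : Differentiable ℝ g)
    (c : Fin 2) (x : ℝ × ℝ) :
    pdd c (fun y => f y * g y) x = f x * pdd c g x + g x * pdd c f x := by
  rw [pdd, fderiv_fun_mul (hf x) (hg x)]
  simp [pdd]

lemma pdd_add {φ ψ : ℝ × ℝ → ℝ} (hφ : Differentiable ℝ φ) (hψ : Differentiable ℝ ψ)
    (c : Fin 2) (x : ℝ × ℝ) :
    pdd c (fun y => φ y + ψ y) x = pdd c φ x + pdd c ψ x := by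
  rw [pdd, fderiv_fun_add (hφ x) (hψ x)]
  simp [pdd]

lemma hessian_mul {f g : ℝ × ℝ → ℝ} (hf : ContDiff ℝ 2 f) (hg : ContDiff ℝ 2 g)
    (a b : Fin 2) (x : ℝ × ℝ) :
    pdd a (pdd b (fun y => f y * g y)) x
      = f x * pdd a (pdd b g) x + pdd a f x * pdd b g x
        + g x * pdd a (pdd b f) x + pdd a g x * pdd b f x := by
  have hdf := (hf.of_le one_le_two).differentiable one_ne_zero
  have hdg := (hg.of_le one_le_two).differentiable one_ne_zero
  have hbf1 : ContDiff ℝ 1 (pdd b f) := pdd_contDiff (contDiff_one_of_two hf) b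
  have hbg1 : ContDiff ℝ 1 (pdd b g) := pdd_contDiff (contDiff_one_of_two hg) b
  have hdbf := hbf1.differentiable one_ne_zero
  have hdbg := hbg1.differentiable one_ne_zero
  have e : pdd b (fun y => f y * g y) = fun y => f y * pdd b g y + g y * pdd b f y :=
    funext fun y => pdd_mul hdf hdg b y
  rw [e, pdd_add (hdf.fun_mul hdbg) (hdg.fun_mul hdbf) a x, pdd_mul hdf hdbg a x,
    pdd_mul hdg hdbf a x]
  ring

lemma hessian_sq {g : ℝ × ℝ → ℝ} (hg : ContDiff ℝ 2 g) (a b : Fin 2) (x : ℝ × ℝ) :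
    pdd a (pdd b (fun y => (g y)^2)) x
      = 2*(g x * pdd a (pdd b g) x) + 2*(pdd a g x * pdd b g x) := by
  have e : (fun y => (g y)^2) = fun y => g y * g y := funext fun y => sq (g y)
  rw [e, hessian_mul hg hg a b x]
  ring

lemma sqrt_bound {X c : ℝ} (hX : Real.sqrt X ≤ c) : Real.sqrt X ≤ c := hX

lemma sqrt_le_of_le_sq {X c : ℝ} (hX : X ≤ c^2) (hc : 0 ≤ c) : Real.sqrt X ≤ c := by
  calc Real.sqrt X ≤ Real.sqrt (c^2) := Real.sqrt_le_sqrt hX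
    _ = c := by rw [Real.sqrt_sq hc]

set_option maxHeartbeats 2000000 in
/-- Core estimate for one entry of the Hessian of a product. -/
lemma core {f g : ℝ × ℝ → ℝ} (hf : ContDiff ℝ 2 f) (hg : ContDiff ℝ 2 g)
    (hfp1 : ∀ x, f (x + (1,0)) = f x) (hfp2 : ∀ x, f (x + (0,1)) = f x)
    (hgp1 : ∀ x, g (x + (1,0)) = g x) (hgp2 : ∀ x, g (x + (0,1)) = g x)
    {p q : ℝ} (hp : 0 ≤ p) (hq : 0 ≤ q)
    (hfN : ∫ x in Q2, (f x)^2 ≤ p^4) (hgN : ∫ x in Q2, (g x)^2 ≤ p^4)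
    (hfH : ∀ a b : Fin 2, ∫ x in Q2, (pdd a (pdd b f) x)^2 ≤ q^4)
    (hgH : ∀ a b : Fin 2, ∫ x in Q2, (pdd a (pdd b g) x)^2 ≤ q^4)
    (a b : Fin 2) :
    ∫ x in Q2, (pdd a (pdd b (fun y => f y * g y)) x)^2 ≤
      8*((p^4 + 4*p^3*q + 4*p^2*q^2)*q^4 + (p^2*q^2 + 2*p*q^3)^2) := by
  have hf1 : ContDiff ℝ 1 f := hf.of_le one_le_two
  have hg1 : ContDiff ℝ 1 g := hg.of_le one_le_two
  have hdf := hf1.differentiable one_ne_zero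
  have hdg := hg1.differentiable one_ne_zero
  have cf := hf1.continuous
  have cg := hg1.continuous
  have hcf1 : ∀ c : Fin 2, ContDiff ℝ 1 (pdd c f) :=
    fun c => pdd_contDiff (contDiff_one_of_two hf) c
  have hcg1 : ∀ c : Fin 2, ContDiff ℝ 1 (pdd c g) :=
    fun c => pdd_contDiff (contDiff_one_of_two hg) c
  have cpf : ∀ c : Fin 2, Continuous (pdd c f) := fun c => (hcf1 c).continuous
  have cpg : ∀ c : Fin 2, Continuous (pdd c g) := fun c => (hcg1 c).continuous
  have cppf : ∀ c d : Fin 2, Continuous (pdd c (pdd d f)) :=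
    fun c d => pdd_continuous (hcf1 d) c
  have cppg : ∀ c d : Fin 2, Continuous (pdd c (pdd d g)) :=
    fun c d => pdd_continuous (hcg1 d) c
  -- integrals are nonnegative
  have hfN0 : (0:ℝ) ≤ ∫ x in Q2, (f x)^2 :=
    setIntegral_nonneg measurableSet_Icc fun x _ => sq_nonneg _
  have hgN0 : (0:ℝ) ≤ ∫ x in Q2, (g x)^2 :=
    setIntegral_nonneg measurableSet_Icc fun x _ => sq_nonneg _
  have hfH0 : ∀ c d : Fin 2, (0:ℝ) ≤ ∫ x in Q2, (pdd c (pdd d f) x)^2 :=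
    fun c d => setIntegral_nonneg measurableSet_Icc fun x _ => sq_nonneg _
  have hgH0 : ∀ c d : Fin 2, (0:ℝ) ≤ ∫ x in Q2, (pdd c (pdd d g) x)^2 :=
    fun c d => setIntegral_nonneg measurableSet_Icc fun x _ => sq_nonneg _
  -- square roots
  have sfN : Real.sqrt (∫ x in Q2, (f x)^2) ≤ p^2 :=
    sqrt_le_of_le_sq (by nlinarith [hfN]) (sq_nonneg p)
  have sgN : Real.sqrt (∫ x in Q2, (g x)^2) ≤ p^2 :=
    sqrt_le_of_le_sq (by nlinarith [hgN]) (sq_nonneg p)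
  have sfH : ∀ c d : Fin 2, Real.sqrt (∫ x in Q2, (pdd c (pdd d f) x)^2) ≤ q^2 :=
    fun c d => sqrt_le_of_le_sq (by nlinarith [hfH c d]) (sq_nonneg q)
  have sgH : ∀ c d : Fin 2, Real.sqrt (∫ x in Q2, (pdd c (pdd d g) x)^2) ≤ q^2 :=
    fun c d => sqrt_le_of_le_sq (by nlinarith [hgH c d]) (sq_nonneg q)
  -- gradient bounds
  have hfG : ∀ c : Fin 2, ∫ x in Q2, (pdd c f x)^2 ≤ p^2*q^2 := by
    intro c
    calc ∫ x in Q2, (pdd c f x)^2 ≤ _ := grad_sq hf hfp1 hfp2 c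
      _ ≤ p^2 * q^2 := by
        apply mul_le_mul sfN (sfH c c) (Real.sqrt_nonneg _) (sq_nonneg p)
  have hgG : ∀ c : Fin 2, ∫ x in Q2, (pdd c g x)^2 ≤ p^2*q^2 := by
    intro c
    calc ∫ x in Q2, (pdd c g x)^2 ≤ _ := grad_sq hg hgp1 hgp2 c
      _ ≤ p^2 * q^2 := by
        apply mul_le_mul sgN (sgH c c) (Real.sqrt_nonneg _) (sq_nonneg p)
  have sfG : ∀ c : Fin 2, Real.sqrt (∫ x in Q2, (pdd c f x)^2) ≤ p*q :=
    fun c => sqrt_le_of_le_sq (by nlinarith [hfG c]) (mul_nonneg hp hq)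
  have sgG : ∀ c : Fin 2, Real.sqrt (∫ x in Q2, (pdd c g x)^2) ≤ p*q :=
    fun c => sqrt_le_of_le_sq (by nlinarith [hgG c]) (mul_nonneg hp hq)
  -- Cauchy-Schwarz products
  have csfG : ∀ c : Fin 2, ∫ x in Q2, |f x * pdd c f x| ≤ p^3*q := by
    intro c
    calc ∫ x in Q2, |f x * pdd c f x| ≤ _ := csQ cf (cpf c)
      _ ≤ p^2 * (p*q) := mul_le_mul sfN (sfG c) (Real.sqrt_nonneg _) (sq_nonneg p)
      _ = p^3*q := by ring
  have csgG : ∀ c : Fin 2, ∫ x in Q2, |g x * pdd c g x| ≤ p^3*q := by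
    intro c
    calc ∫ x in Q2, |g x * pdd c g x| ≤ _ := csQ cg (cpg c)
      _ ≤ p^2 * (p*q) := mul_le_mul sgN (sgG c) (Real.sqrt_nonneg _) (sq_nonneg p)
      _ = p^3*q := by ring
  have csfGG : ∀ c d : Fin 2, ∫ x in Q2, |pdd c f x * pdd d f x| ≤ p^2*q^2 := by
    intro c d
    calc ∫ x in Q2, |pdd c f x * pdd d f x| ≤ _ := csQ (cpf c) (cpf d)
      _ ≤ (p*q) * (p*q) := mul_le_mul (sfG c) (sfG d) (Real.sqrt_nonneg _)
          (mul_nonneg hp hq)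
      _ = p^2*q^2 := by ring
  have csgGG : ∀ c d : Fin 2, ∫ x in Q2, |pdd c g x * pdd d g x| ≤ p^2*q^2 := by
    intro c d
    calc ∫ x in Q2, |pdd c g x * pdd d g x| ≤ _ := csQ (cpg c) (cpg d)
      _ ≤ (p*q) * (p*q) := mul_le_mul (sgG c) (sgG d) (Real.sqrt_nonneg _)
          (mul_nonneg hp hq)
      _ = p^2*q^2 := by ring
  have csfHH : ∀ c d : Fin 2, ∫ x in Q2, |f x * pdd c (pdd d f) x| ≤ p^2*q^2 := by
    intro c d
    calc ∫ x in Q2, |f x * pdd c (pdd d f) x| ≤ _ := csQ cf (cppf c d)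
      _ ≤ p^2 * q^2 := mul_le_mul sfN (sfH c d) (Real.sqrt_nonneg _) (sq_nonneg p)
  have csgHH : ∀ c d : Fin 2, ∫ x in Q2, |g x * pdd c (pdd d g) x| ≤ p^2*q^2 := by
    intro c d
    calc ∫ x in Q2, |g x * pdd c (pdd d g) x| ≤ _ := csQ cg (cppg c d)
      _ ≤ p^2 * q^2 := mul_le_mul sgN (sgH c d) (Real.sqrt_nonneg _) (sq_nonneg p)
  -- L∞ bound for f² and g²
  have hsup : ∀ (h : ℝ×ℝ→ℝ), ContDiff ℝ 2 h →
      (∫ x in Q2, (h x)^2 ≤ p^4) →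
      (∀ c : Fin 2, ∫ x in Q2, |h x * pdd c h x| ≤ p^3*q) →
      (∀ c d : Fin 2, ∫ x in Q2, |h x * pdd c (pdd d h) x| ≤ p^2*q^2) →
      (∀ c d : Fin 2, ∫ x in Q2, |pdd c h x * pdd d h x| ≤ p^2*q^2) →
      ∀ x ∈ Q2, (h x)^2 ≤ p^4 + 4*p^3*q + 4*p^2*q^2 := by
    intro h hh hhN hhG hhHH hhGG x hx
    have hh1 : ContDiff ℝ 1 h := hh.of_le one_le_two
    have hdh := hh1.differentiable one_ne_zero
    have ch := hh1.continuous
    have hH2 : ContDiff ℝ 2 (fun z => (h z)^2) := hh.pow 2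
    have cH := hH2.continuous
    have cpH : ∀ c : Fin 2, Continuous (pdd c (fun z => (h z)^2)) :=
      fun c => pdd_continuous (hH2.of_le one_le_two) c
    have cppH : Continuous (pdd 1 (pdd 0 (fun z => (h z)^2))) :=
      pdd_continuous (pdd_contDiff (contDiff_one_of_two hH2) 0) 1
    have hle := (le_abs_self _).trans (linf hH2 hx)
    have hsplit : ∫ z in Q2, ((|(h z)^2| + |pdd 1 (fun z => (h z)^2) z|)
          + (|pdd 0 (fun z => (h z)^2) z| + |pdd 1 (pdd 0 (fun z => (h z)^2)) z|))
        = (∫ z in Q2, |(h z)^2|) + (∫ z in Q2, |pdd 1 (fun z => (h z)^2) z|)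
          + ((∫ z in Q2, |pdd 0 (fun z => (h z)^2) z|)
            + ∫ z in Q2, |pdd 1 (pdd 0 (fun z => (h z)^2)) z|) := by
      rw [integral_add (intgQ ((cH.abs).fun_add (cpH 1).abs)) (intgQ ((cpH 0).abs.fun_add cppH.abs)),
        integral_add (intgQ cH.abs) (intgQ (cpH 1).abs),
        integral_add (intgQ (cpH 0).abs) (intgQ cppH.abs)]
    have e1 : ∫ z in Q2, |(h z)^2| ≤ p^4 := by
      have : ∫ z in Q2, |(h z)^2| = ∫ z in Q2, (h z)^2 :=
        setIntegral_congr_fun measurableSet_Icc fun z _ => abs_of_nonneg (sq_nonneg _)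
      rw [this]; exact hhN
    have e2 : ∀ c : Fin 2, ∫ z in Q2, |pdd c (fun z => (h z)^2) z| ≤ 2*(p^3*q) := by
      intro c
      have eq1 : ∫ z in Q2, |pdd c (fun z => (h z)^2) z|
          = ∫ z in Q2, 2 * |h z * pdd c h z| := by
        apply setIntegral_congr_fun measurableSet_Icc
        intro z _
        show |pdd c (fun z => (h z)^2) z| = 2 * |h z * pdd c h z|
        rw [pdd_sq hdh c z, mul_assoc, abs_mul, abs_two]
      rw [eq1, integral_const_mul]
      linarith [hhG c]
    have e4 : ∫ z in Q2, |pdd 1 (pdd 0 (fun z => (h z)^2)) z|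
        ≤ 2*(p^2*q^2) + 2*(p^2*q^2) := by
      have ptw : ∀ z, |pdd 1 (pdd 0 (fun z => (h z)^2)) z|
          ≤ 2 * |h z * pdd 1 (pdd 0 h) z| + 2 * |pdd 1 h z * pdd 0 h z| := by
        intro z
        rw [hessian_sq hh 1 0 z]
        calc |2*(h z * pdd 1 (pdd 0 h) z) + 2*(pdd 1 h z * pdd 0 h z)|
            ≤ |2*(h z * pdd 1 (pdd 0 h) z)| + |2*(pdd 1 h z * pdd 0 h z)| := abs_add_le _ _
          _ = 2 * |h z * pdd 1 (pdd 0 h) z| + 2 * |pdd 1 h z * pdd 0 h z| := by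
              simp only [abs_mul, abs_two]
      have cB : Continuous fun z => 2 * |h z * pdd 1 (pdd 0 h) z|
          + 2 * |pdd 1 h z * pdd 0 h z| := by
        have c1 : Continuous (pdd 1 (pdd 0 h)) :=
          pdd_continuous (pdd_contDiff (contDiff_one_of_two hh) 0) 1
        have c2 : Continuous (pdd 1 h) := pdd_continuous hh1 1
        have c3 : Continuous (pdd 0 h) := pdd_continuous hh1 0
        exact ((continuous_const.mul (ch.mul c1).abs).add (continuous_const.mul (c2.mul c3).abs))
      have := setIntegral_mono_on (intgQ cppH.abs) (intgQ cB) measurableSet_Icc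
        (fun z _ => ptw z)
      have hint : ∫ z in Q2, (2 * |h z * pdd 1 (pdd 0 h) z| + 2 * |pdd 1 h z * pdd 0 h z|)
          = 2 * (∫ z in Q2, |h z * pdd 1 (pdd 0 h) z|)
            + 2 * ∫ z in Q2, |pdd 1 h z * pdd 0 h z| := by
        have c1 : Continuous (pdd 1 (pdd 0 h)) :=
          pdd_continuous (pdd_contDiff (contDiff_one_of_two hh) 0) 1
        have c2 : Continuous (pdd 1 h) := pdd_continuous hh1 1
        have c3 : Continuous (pdd 0 h) := pdd_continuous hh1 0
        rw [integral_add (intgQ (continuous_const.fun_mul (ch.fun_mul c1).abs))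
          (intgQ (continuous_const.fun_mul (c2.fun_mul c3).abs)), integral_const_mul, integral_const_mul]
      rw [hint] at this
      have b1 := hhHH 1 0
      have b2 := hhGG 1 0
      linarith
    calc (h x)^2 ≤ _ := hle
      _ ≤ p^4 + 2*(p^3*q) + (2*(p^3*q) + (2*(p^2*q^2) + 2*(p^2*q^2))) := by
          rw [hsplit]; have := e2 0; have := e2 1; linarith [e1, e2 0, e2 1, e4]
      _ = p^4 + 4*p^3*q + 4*p^2*q^2 := by ring
  have hsupf := hsup f hf hfN csfG csfHH csfGG
  have hsupg := hsup g hg hgN csgG csgHH csgGG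
  -- L⁴ bounds for gradients
  have hL4 : ∀ (h : ℝ×ℝ→ℝ), ContDiff ℝ 2 h →
      (∀ c : Fin 2, ∫ x in Q2, (pdd c h x)^2 ≤ p^2*q^2) →
      (∀ c : Fin 2, Real.sqrt (∫ x in Q2, (pdd c h x)^2) ≤ p*q) →
      (∀ c d : Fin 2, Real.sqrt (∫ x in Q2, (pdd c (pdd d h) x)^2) ≤ q^2) →
      ∀ c : Fin 2, ∫ x in Q2, (pdd c h x)^4 ≤ (p^2*q^2 + 2*p*q^3)^2 := by
    intro h hh hhG shG shH c
    have hc1 : ContDiff ℝ 1 (pdd c h) := pdd_contDiff (contDiff_one_of_two hh) c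
    have cw : Continuous (pdd c h) := hc1.continuous
    have cw0 : Continuous (pdd 0 (pdd c h)) := pdd_continuous hc1 0
    have cw1 : Continuous (pdd 1 (pdd c h)) := pdd_continuous hc1 1
    have hlady := lady hc1
    have factor : ∀ d : Fin 2, Continuous (pdd d (pdd c h)) →
        (∫ z in Q2, ((pdd c h z)^2 + 2 * |pdd c h z * pdd d (pdd c h) z|))
          ≤ p^2*q^2 + 2*(p*q*q^2) := by
      intro d cwd
      have hsplit : ∫ z in Q2, ((pdd c h z)^2 + 2 * |pdd c h z * pdd d (pdd c h) z|)
          = (∫ z in Q2, (pdd c h z)^2)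
            + 2 * ∫ z in Q2, |pdd c h z * pdd d (pdd c h) z| := by
        rw [integral_add (intgQ (cw.fun_pow 2)) (intgQ (continuous_const.fun_mul (cw.fun_mul cwd).abs)),
          integral_const_mul]
      rw [hsplit]
      have hcs : ∫ z in Q2, |pdd c h z * pdd d (pdd c h) z| ≤ (p*q)*q^2 := by
        calc ∫ z in Q2, |pdd c h z * pdd d (pdd c h) z| ≤ _ := csQ cw cwd
          _ ≤ (p*q)*q^2 := mul_le_mul (shG c) (shH d c) (Real.sqrt_nonneg _)
              (mul_nonneg hp hq)
      linarith [hhG c]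
    have f0 := factor 0 cw0
    have f1 := factor 1 cw1
    have n0 : (0:ℝ) ≤ ∫ z in Q2, ((pdd c h z)^2 + 2 * |pdd c h z * pdd 0 (pdd c h) z|) :=
      setIntegral_nonneg measurableSet_Icc fun z _ => by positivity
    have hb : (0:ℝ) ≤ p^2*q^2 + 2*(p*q*q^2) := by positivity
    calc ∫ z in Q2, (pdd c h z)^4 ≤ _ := hlady
      _ ≤ (p^2*q^2 + 2*(p*q*q^2)) * (p^2*q^2 + 2*(p*q*q^2)) := by
          apply mul_le_mul f0 f1 ?_ hb
          exact setIntegral_nonneg measurableSet_Icc fun z _ => by positivity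
      _ = (p^2*q^2 + 2*p*q^3)^2 := by ring
  have hL4f := hL4 f hf hfG sfG sfH
  have hL4g := hL4 g hg hgG sgG sgH
  -- pointwise expansion bound
  have key : ∀ x : ℝ × ℝ, (pdd a (pdd b (fun y => f y * g y)) x)^2
      ≤ 4*((f x)^2*(pdd a (pdd b g) x)^2 + (pdd a f x)^2*(pdd b g x)^2
          + (g x)^2*(pdd a (pdd b f) x)^2 + (pdd a g x)^2*(pdd b f x)^2) := by
    intro x
    rw [hessian_mul hf hg a b x]
    nlinarith [sq_nonneg (f x * pdd a (pdd b g) x - pdd a f x * pdd b g x),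
      sq_nonneg (f x * pdd a (pdd b g) x - g x * pdd a (pdd b f) x),
      sq_nonneg (f x * pdd a (pdd b g) x - pdd a g x * pdd b f x),
      sq_nonneg (pdd a f x * pdd b g x - g x * pdd a (pdd b f) x),
      sq_nonneg (pdd a f x * pdd b g x - pdd a g x * pdd b f x),
      sq_nonneg (g x * pdd a (pdd b f) x - pdd a g x * pdd b f x)]
  -- continuity of the big integrands
  have cfg2 : ContDiff ℝ 2 fun y => f y * g y := hf.mul hg
  have cT : Continuous (pdd a (pdd b (fun y => f y * g y))) :=
    pdd_continuous (pdd_contDiff (contDiff_one_of_two cfg2) b) a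
  have cR1 : Continuous fun x => (f x)^2*(pdd a (pdd b g) x)^2 :=
    (cf.pow 2).mul ((cppg a b).pow 2)
  have cR2 : Continuous fun x => (pdd a f x)^2*(pdd b g x)^2 :=
    ((cpf a).pow 2).mul ((cpg b).pow 2)
  have cR3 : Continuous fun x => (g x)^2*(pdd a (pdd b f) x)^2 :=
    (cg.pow 2).mul ((cppf a b).pow 2)
  have cR4 : Continuous fun x => (pdd a g x)^2*(pdd b f x)^2 :=
    ((cpg a).pow 2).mul ((cpf b).pow 2)
  have hmono : ∫ x in Q2, (pdd a (pdd b (fun y => f y * g y)) x)^2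
      ≤ ∫ x in Q2, 4*((f x)^2*(pdd a (pdd b g) x)^2 + (pdd a f x)^2*(pdd b g x)^2
          + (g x)^2*(pdd a (pdd b f) x)^2 + (pdd a g x)^2*(pdd b f x)^2) := by
    apply setIntegral_mono_on (intgQ (cT.pow 2))
      (intgQ (continuous_const.mul (((cR1.add cR2).add cR3).add cR4))) measurableSet_Icc
    exact fun x _ => key x
  have hsplit4 : ∫ x in Q2, 4*((f x)^2*(pdd a (pdd b g) x)^2 + (pdd a f x)^2*(pdd b g x)^2
          + (g x)^2*(pdd a (pdd b f) x)^2 + (pdd a g x)^2*(pdd b f x)^2)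
      = 4*((∫ x in Q2, (f x)^2*(pdd a (pdd b g) x)^2)
          + (∫ x in Q2, (pdd a f x)^2*(pdd b g x)^2)
          + (∫ x in Q2, (g x)^2*(pdd a (pdd b f) x)^2)
          + ∫ x in Q2, (pdd a g x)^2*(pdd b f x)^2) := by
    have iA : IntegrableOn (fun x => (f x)^2*(pdd a (pdd b g) x)^2
        + (pdd a f x)^2*(pdd b g x)^2 + (g x)^2*(pdd a (pdd b f) x)^2) Q2 :=
      ((intgQ cR1).add (intgQ cR2)).add (intgQ cR3)
    have iA2 : IntegrableOn (fun x => (f x)^2*(pdd a (pdd b g) x)^2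
        + (pdd a f x)^2*(pdd b g x)^2) Q2 := (intgQ cR1).add (intgQ cR2)
    rw [integral_const_mul, integral_add iA (intgQ cR4), integral_add iA2 (intgQ cR3),
      integral_add (intgQ cR1) (intgQ cR2)]
  -- bound the four pieces
  have Kpos : (0:ℝ) ≤ p^4 + 4*p^3*q + 4*p^2*q^2 := by positivity
  have I1 : ∫ x in Q2, (f x)^2*(pdd a (pdd b g) x)^2
      ≤ (p^4 + 4*p^3*q + 4*p^2*q^2)*q^4 := by
    have step : ∫ x in Q2, (f x)^2*(pdd a (pdd b g) x)^2
        ≤ ∫ x in Q2, (p^4 + 4*p^3*q + 4*p^2*q^2)*(pdd a (pdd b g) x)^2 := by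
      apply setIntegral_mono_on (intgQ cR1)
        (intgQ (continuous_const.mul ((cppg a b).pow 2))) measurableSet_Icc
      intro x hx
      exact mul_le_mul_of_nonneg_right (hsupf x hx) (sq_nonneg _)
    rw [integral_const_mul] at step
    calc ∫ x in Q2, (f x)^2*(pdd a (pdd b g) x)^2 ≤ _ := step
      _ ≤ (p^4 + 4*p^3*q + 4*p^2*q^2)*q^4 :=
          mul_le_mul_of_nonneg_left (hgH a b) Kpos
  have I3 : ∫ x in Q2, (g x)^2*(pdd a (pdd b f) x)^2
      ≤ (p^4 + 4*p^3*q + 4*p^2*q^2)*q^4 := by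
    have step : ∫ x in Q2, (g x)^2*(pdd a (pdd b f) x)^2
        ≤ ∫ x in Q2, (p^4 + 4*p^3*q + 4*p^2*q^2)*(pdd a (pdd b f) x)^2 := by
      apply setIntegral_mono_on (intgQ cR3)
        (intgQ (continuous_const.mul ((cppf a b).pow 2))) measurableSet_Icc
      intro x hx
      exact mul_le_mul_of_nonneg_right (hsupg x hx) (sq_nonneg _)
    rw [integral_const_mul] at step
    calc ∫ x in Q2, (g x)^2*(pdd a (pdd b f) x)^2 ≤ _ := step
      _ ≤ (p^4 + 4*p^3*q + 4*p^2*q^2)*q^4 :=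
          mul_le_mul_of_nonneg_left (hfH a b) Kpos
  have I2 : ∫ x in Q2, (pdd a f x)^2*(pdd b g x)^2 ≤ (p^2*q^2 + 2*p*q^3)^2 := by
    have step : ∫ x in Q2, (pdd a f x)^2*(pdd b g x)^2
        ≤ ∫ x in Q2, ((1:ℝ)/2*(pdd a f x)^4 + 1/2*(pdd b g x)^4) := by
      apply setIntegral_mono_on (intgQ cR2)
        (intgQ ((continuous_const.fun_mul ((cpf a).fun_pow 4)).fun_add
          (continuous_const.fun_mul ((cpg b).fun_pow 4)))) measurableSet_Icc
      intro x _
      nlinarith [sq_nonneg ((pdd a f x)^2 - (pdd b g x)^2)]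
    have hsplit : ∫ x in Q2, ((1:ℝ)/2*(pdd a f x)^4 + 1/2*(pdd b g x)^4)
        = (1:ℝ)/2*(∫ x in Q2, (pdd a f x)^4) + 1/2*∫ x in Q2, (pdd b g x)^4 := by
      rw [integral_add (intgQ (continuous_const.fun_mul ((cpf a).fun_pow 4)))
        (intgQ (continuous_const.fun_mul ((cpg b).fun_pow 4))), integral_const_mul, integral_const_mul]
    rw [hsplit] at step
    have := hL4f a
    have := hL4g b
    linarith
  have I4 : ∫ x in Q2, (pdd a g x)^2*(pdd b f x)^2 ≤ (p^2*q^2 + 2*p*q^3)^2 := by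
    have step : ∫ x in Q2, (pdd a g x)^2*(pdd b f x)^2
        ≤ ∫ x in Q2, ((1:ℝ)/2*(pdd a g x)^4 + 1/2*(pdd b f x)^4) := by
      apply setIntegral_mono_on (intgQ cR4)
        (intgQ ((continuous_const.fun_mul ((cpg a).fun_pow 4)).fun_add
          (continuous_const.fun_mul ((cpf b).fun_pow 4)))) measurableSet_Icc
      intro x _
      nlinarith [sq_nonneg ((pdd a g x)^2 - (pdd b f x)^2)]
    have hsplit : ∫ x in Q2, ((1:ℝ)/2*(pdd a g x)^4 + 1/2*(pdd b f x)^4)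
        = (1:ℝ)/2*(∫ x in Q2, (pdd a g x)^4) + 1/2*∫ x in Q2, (pdd b f x)^4 := by
      rw [integral_add (intgQ (continuous_const.fun_mul ((cpg a).fun_pow 4)))
        (intgQ (continuous_const.fun_mul ((cpf b).fun_pow 4))), integral_const_mul, integral_const_mul]
    rw [hsplit] at step
    have := hL4g a
    have := hL4f b
    linarith
  rw [hsplit4] at hmono
  linarith

lemma final_poly {p q : ℝ} (hp : 0 ≤ p) (hq : 0 ≤ q) :
    16*(8*((p^4 + 4*p^3*q + 4*p^2*q^2)*q^4 + (p^2*q^2 + 2*p*q^3)^2))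
      ≤ 4096*(p^2*q^6 + p^6*q^2) := by
  nlinarith [sq_nonneg (p*p*p*q - p*q*q*q), mul_nonneg (sq_nonneg (p*p*q - p*q*q)) (sq_nonneg q),
    mul_nonneg (mul_nonneg hp hq) (mul_nonneg hp hq), sq_nonneg (p*q)]

end HTS

open HTS in
set_option maxHeartbeats 2000000 in
/-- There is a constant `C` such that for all periodic `H²` (here `C²`) vector fields `v`,
`‖∇²(v⊗v)‖₂² ≤ C(‖v‖₂ ‖∇²v‖₂³ + ‖v‖₂³ ‖∇²v‖₂)`. -/
theorem hessian_tensor_square_estimate :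
    ∃ C : ℝ, 0 < C ∧
      ∀ v : ℝ × ℝ → ℝ × ℝ, ContDiff ℝ 2 v →
        (∀ x : ℝ × ℝ, v (x + (1, 0)) = v x) →
        (∀ x : ℝ × ℝ, v (x + (0, 1)) = v x) →
        (∫ x in Set.Icc (0 : ℝ × ℝ) 1,
            ∑ i : Fin 2, ∑ j : Fin 2, ∑ a : Fin 2, ∑ b : Fin 2,
              (pdd a (pdd b (fun y => vcomp v i y * vcomp v j y)) x)^2)
          ≤ C * (Real.sqrt (∫ x in Set.Icc (0 : ℝ × ℝ) 1, ‖v x‖^2)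
                  * (Real.sqrt (∫ x in Set.Icc (0 : ℝ × ℝ) 1,
                      ∑ i : Fin 2, ∑ a : Fin 2, ∑ b : Fin 2,
                        (pdd a (pdd b (vcomp v i)) x)^2))^3
                + (Real.sqrt (∫ x in Set.Icc (0 : ℝ × ℝ) 1, ‖v x‖^2))^3
                  * Real.sqrt (∫ x in Set.Icc (0 : ℝ × ℝ) 1,
                      ∑ i : Fin 2, ∑ a : Fin 2, ∑ b : Fin 2,
                        (pdd a (pdd b (vcomp v i)) x)^2)) := by
  refine ⟨4096, by norm_num, ?_⟩
  intro v hv hper1 hper2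
  -- components
  have hfC : ∀ i : Fin 2, ContDiff ℝ 2 (vcomp v i) := by
    intro i
    fin_cases i
    · exact contDiff_fst.comp hv
    · exact contDiff_snd.comp hv
  have hfp1 : ∀ (i : Fin 2) x, vcomp v i (x + (1,0)) = vcomp v i x := by
    intro i x
    fin_cases i <;> simp [vcomp, hper1 x]
  have hfp2 : ∀ (i : Fin 2) x, vcomp v i (x + (0,1)) = vcomp v i x := by
    intro i x
    fin_cases i <;> simp [vcomp, hper2 x]
  set A2 := ∫ x in Q2, ‖v x‖^2 with hA2def
  set B2 := ∫ x in Q2, ∑ i : Fin 2, ∑ a : Fin 2, ∑ b : Fin 2,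
      (pdd a (pdd b (vcomp v i)) x)^2 with hB2def
  have cnv : Continuous fun x => ‖v x‖^2 := (hv.continuous.norm).pow 2
  have d0 : ∀ (i a b : Fin 2), Continuous (pdd a (pdd b (vcomp v i))) :=
    fun i a b => pdd_continuous (pdd_contDiff (contDiff_one_of_two (hfC i)) b) a
  have cB2 : Continuous fun x => ∑ i : Fin 2, ∑ a : Fin 2, ∑ b : Fin 2,
      (pdd a (pdd b (vcomp v i)) x)^2 :=
    continuous_finset_sum _ fun i _ => continuous_finset_sum _ fun a _ =>
      continuous_finset_sum _ fun b _ => (d0 i a b).pow 2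
  have hA2 : (0:ℝ) ≤ A2 := setIntegral_nonneg measurableSet_Icc fun x _ => by positivity
  have hB2 : (0:ℝ) ≤ B2 := setIntegral_nonneg measurableSet_Icc fun x _ =>
    Finset.sum_nonneg fun i _ => Finset.sum_nonneg fun a _ =>
      Finset.sum_nonneg fun b _ => sq_nonneg _
  set p := Real.sqrt (Real.sqrt A2) with hpdef
  set q := Real.sqrt (Real.sqrt B2) with hqdef
  have hp : 0 ≤ p := Real.sqrt_nonneg _
  have hq : 0 ≤ q := Real.sqrt_nonneg _
  have hp2 : p^2 = Real.sqrt A2 := Real.sq_sqrt (Real.sqrt_nonneg _)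
  have hq2 : q^2 = Real.sqrt B2 := Real.sq_sqrt (Real.sqrt_nonneg _)
  have hp4 : p^4 = A2 := by
    rw [show p^4 = (p^2)^2 from by ring, hp2, Real.sq_sqrt hA2]
  have hq4 : q^4 = B2 := by
    rw [show q^4 = (q^2)^2 from by ring, hq2, Real.sq_sqrt hB2]
  -- component L² bounds
  have hfN : ∀ i : Fin 2, ∫ x in Q2, (vcomp v i x)^2 ≤ p^4 := by
    intro i
    rw [hp4]
    apply setIntegral_mono_on (intgQ ((hfC i).continuous.pow 2)) (intgQ cnv) measurableSet_Icc
    intro x _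
    fin_cases i
    · calc (vcomp v 0 x)^2 = ‖(v x).1‖^2 := by simp [vcomp, sq_abs, Real.norm_eq_abs]
        _ ≤ ‖v x‖^2 := by
            apply pow_le_pow_left₀ (norm_nonneg _) (norm_fst_le (v x))
    · calc (vcomp v 1 x)^2 = ‖(v x).2‖^2 := by simp [vcomp, sq_abs, Real.norm_eq_abs]
        _ ≤ ‖v x‖^2 := by
            apply pow_le_pow_left₀ (norm_nonneg _) (norm_snd_le (v x))
  have hfH : ∀ (i a b : Fin 2), ∫ x in Q2, (pdd a (pdd b (vcomp v i)) x)^2 ≤ q^4 := by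
    intro i a b
    rw [hq4]
    apply setIntegral_mono_on (intgQ ((d0 i a b).pow 2)) (intgQ cB2) measurableSet_Icc
    intro x _
    calc (pdd a (pdd b (vcomp v i)) x)^2
        ≤ ∑ b' : Fin 2, (pdd a (pdd b' (vcomp v i)) x)^2 :=
          Finset.single_le_sum (f := fun b' => (pdd a (pdd b' (vcomp v i)) x)^2)
            (fun _ _ => sq_nonneg _) (Finset.mem_univ b)
      _ ≤ ∑ a' : Fin 2, ∑ b' : Fin 2, (pdd a' (pdd b' (vcomp v i)) x)^2 :=
          Finset.single_le_sum (f := fun a' => ∑ b' : Fin 2, (pdd a' (pdd b' (vcomp v i)) x)^2)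
            (fun _ _ => Finset.sum_nonneg fun _ _ => sq_nonneg _) (Finset.mem_univ a)
      _ ≤ ∑ i' : Fin 2, ∑ a' : Fin 2, ∑ b' : Fin 2, (pdd a' (pdd b' (vcomp v i')) x)^2 :=
          Finset.single_le_sum
            (f := fun i' => ∑ a' : Fin 2, ∑ b' : Fin 2, (pdd a' (pdd b' (vcomp v i')) x)^2)
            (fun _ _ => Finset.sum_nonneg fun _ _ => Finset.sum_nonneg fun _ _ => sq_nonneg _)
            (Finset.mem_univ i)
  -- pull the sums out of the integral
  have c0 : ∀ (i j a b : Fin 2),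
      Continuous fun x => (pdd a (pdd b (fun y => vcomp v i y * vcomp v j y)) x)^2 :=
    fun i j a b => (pdd_continuous (pdd_contDiff
      (contDiff_one_of_two ((hfC i).mul (hfC j))) b) a).pow 2
  have c1 : ∀ (i j a : Fin 2), Continuous fun x => ∑ b : Fin 2,
      (pdd a (pdd b (fun y => vcomp v i y * vcomp v j y)) x)^2 :=
    fun i j a => continuous_finset_sum _ fun b _ => c0 i j a b
  have c2 : ∀ (i j : Fin 2), Continuous fun x => ∑ a : Fin 2, ∑ b : Fin 2,
      (pdd a (pdd b (fun y => vcomp v i y * vcomp v j y)) x)^2 :=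
    fun i j => continuous_finset_sum _ fun a _ => c1 i j a
  have c3 : ∀ i : Fin 2, Continuous fun x => ∑ j : Fin 2, ∑ a : Fin 2, ∑ b : Fin 2,
      (pdd a (pdd b (fun y => vcomp v i y * vcomp v j y)) x)^2 :=
    fun i => continuous_finset_sum _ fun j _ => c2 i j
  have hpull : (∫ x in Q2, ∑ i : Fin 2, ∑ j : Fin 2, ∑ a : Fin 2, ∑ b : Fin 2,
        (pdd a (pdd b (fun y => vcomp v i y * vcomp v j y)) x)^2)
      = ∑ i : Fin 2, ∑ j : Fin 2, ∑ a : Fin 2, ∑ b : Fin 2,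
        ∫ x in Q2, (pdd a (pdd b (fun y => vcomp v i y * vcomp v j y)) x)^2 := by
    rw [integral_finset_sum _ fun i _ => intgQ (c3 i)]
    refine Finset.sum_congr rfl fun i _ => ?_
    rw [integral_finset_sum _ fun j _ => intgQ (c2 i j)]
    refine Finset.sum_congr rfl fun j _ => ?_
    rw [integral_finset_sum _ fun a _ => intgQ (c1 i j a)]
    refine Finset.sum_congr rfl fun a _ => ?_
    rw [integral_finset_sum _ fun b _ => intgQ (c0 i j a b)]
  -- apply the core estimate to each term
  have hcore : ∀ (i j a b : Fin 2),
      ∫ x in Q2, (pdd a (pdd b (fun y => vcomp v i y * vcomp v j y)) x)^2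
        ≤ 8*((p^4 + 4*p^3*q + 4*p^2*q^2)*q^4 + (p^2*q^2 + 2*p*q^3)^2) :=
    fun i j a b => core (hfC i) (hfC j) (hfp1 i) (hfp2 i) (hfp1 j) (hfp2 j) hp hq
      (hfN i) (hfN j) (hfH i) (hfH j) a b
  rw [hpull]
  have hsum : ∑ i : Fin 2, ∑ j : Fin 2, ∑ a : Fin 2, ∑ b : Fin 2,
        (∫ x in Q2, (pdd a (pdd b (fun y => vcomp v i y * vcomp v j y)) x)^2)
      ≤ 16*(8*((p^4 + 4*p^3*q + 4*p^2*q^2)*q^4 + (p^2*q^2 + 2*p*q^3)^2)) := by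
    simp only [Fin.sum_univ_two]
    linarith [hcore 0 0 0 0, hcore 0 0 0 1, hcore 0 0 1 0, hcore 0 0 1 1,
      hcore 0 1 0 0, hcore 0 1 0 1, hcore 0 1 1 0, hcore 0 1 1 1,
      hcore 1 0 0 0, hcore 1 0 0 1, hcore 1 0 1 0, hcore 1 0 1 1,
      hcore 1 1 0 0, hcore 1 1 0 1, hcore 1 1 1 0, hcore 1 1 1 1]
  calc ∑ i : Fin 2, ∑ j : Fin 2, ∑ a : Fin 2, ∑ b : Fin 2,
        (∫ x in Q2, (pdd a (pdd b (fun y => vcomp v i y * vcomp v j y)) x)^2)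
      ≤ 16*(8*((p^4 + 4*p^3*q + 4*p^2*q^2)*q^4 + (p^2*q^2 + 2*p*q^3)^2)) := hsum
    _ ≤ 4096*(p^2*q^6 + p^6*q^2) := final_poly hp hq
    _ = 4096 * (Real.sqrt A2 * (Real.sqrt B2)^3 + (Real.sqrt A2)^3 * Real.sqrt B2) := by
        rw [← hp2, ← hq2]; ring
end
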